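/- arXiv:1907.13122 — 5 statements merged into one kernel-verified Lean document; each statement's English description precedes it below -/
import Mathlib

section
/- Let f : ℝⁿ → ℝⁿ be continuously differentiable and suppose there exists λ > 0 such that the symmetric part of its Jacobian is uniformly negative definite: (1/2)(Df(x) + Df(x)ᵀ) ≼ −λ Iₙ for all x ∈ ℝⁿ (as symmetric matrices). Then for any two solutions x(·), y(·) of the ODE ż(t) = f(z(t)) defined on [0, ∞), the Euclidean distance between them contracts exponentially at rate λ: ‖x(t) − y(t)‖ ≤ e^{−λ t} ‖x(0) − y(0)‖ for all t ≥ 0. -/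
/-!
Differentiating along the segment from `b` to `a` turns the Jacobian bound into the one-sided
Lipschitz bound `⟪f a - f b, a - b⟫ ≤ -λ ‖a - b‖²`. Along two trajectories this gives
`d/dt ‖x - y‖² ≤ -2λ ‖x - y‖²`, so `e^{2λt} ‖x(t) - y(t)‖²` is nonincreasing.
-/

open scoped RealInnerProductSpace

section

variable {E : Type*} [NormedAddCommGroup E] [InnerProductSpace ℝ E]

theorem inner_sub_sub_le_of_inner_fderiv_le {f : E → E} (hf : Differentiable ℝ f) {c : ℝ}
    (hc : ∀ x v : E, ⟪fderiv ℝ f x v, v⟫ ≤ c * ‖v‖ ^ 2) (a b : E) :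
    ⟪f a - f b, a - b⟫ ≤ c * ‖a - b‖ ^ 2 := by
  set u := a - b
  have hφ : ∀ s : ℝ,
      HasDerivAt (fun s : ℝ ↦ ⟪f (b + s • u), u⟫) ⟪fderiv ℝ f (b + s • u) u, u⟫ s := by
    intro s
    have hline : HasDerivAt (fun s : ℝ ↦ b + s • u) u s := by
      simpa using ((hasDerivAt_id s).smul_const u).const_add b
    simpa using ((hf _).hasFDerivAt.comp_hasDerivAt s hline).inner ℝ (hasDerivAt_const s u)
  have hmvt := image_sub_le_mul_sub_of_deriv_le (fun s ↦ (hφ s).differentiableAt)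
    (fun s ↦ (hφ s).deriv ▸ hc _ u) zero_le_one
  simpa [u, inner_sub_left] using hmvt

theorem norm_le_exp_mul_of_inner_deriv_le {u u' : ℝ → E} {c : ℝ}
    (hu : ∀ t ∈ Set.Ici (0 : ℝ), HasDerivWithinAt u (u' t) (Set.Ici 0) t)
    (hc : ∀ t ∈ Set.Ici (0 : ℝ), ⟪u t, u' t⟫ ≤ c * ‖u t‖ ^ 2) :
    ∀ t ∈ Set.Ici (0 : ℝ), ‖u t‖ ≤ Real.exp (c * t) * ‖u 0‖ := by
  set g : ℝ → ℝ := fun t ↦ Real.exp (-(2 * c) * t) * ‖u t‖ ^ 2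
  have hg : ∀ t ∈ Set.Ici (0 : ℝ), HasDerivWithinAt g
      (Real.exp (-(2 * c) * t) * (-(2 * c)) * ‖u t‖ ^ 2
        + Real.exp (-(2 * c) * t) * (2 * ⟪u t, u' t⟫)) (Set.Ici 0) t := fun t ht ↦
    (((hasDerivAt_id t).const_mul _).exp.hasDerivWithinAt.congr_deriv (by simp)).mul
      (hu t ht).norm_sq
  have hg_nonpos : ∀ t ∈ Set.Ici (0 : ℝ), Real.exp (-(2 * c) * t) * (-(2 * c)) * ‖u t‖ ^ 2
      + Real.exp (-(2 * c) * t) * (2 * ⟪u t, u' t⟫) ≤ 0 := by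
    intro t ht
    have := mul_le_mul_of_nonneg_left (hc t ht) (Real.exp_pos (-(2 * c) * t)).le
    linarith
  have hanti : AntitoneOn g (Set.Ici 0) := by
    refine antitoneOn_of_hasDerivWithinAt_nonpos (convex_Ici 0)
      (fun t ht ↦ (hg t ht).continuousWithinAt) (fun t ht ↦ ?_)
      (fun t ht ↦ hg_nonpos t (interior_subset ht))
    exact (hg t (interior_subset ht)).mono interior_subset
  intro t ht
  have hgt : Real.exp (-(2 * c) * t) * ‖u t‖ ^ 2 ≤ ‖u 0‖ ^ 2 := by
    simpa [g] using hanti Set.self_mem_Ici ht ht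
  have hexp : Real.exp (-(2 * c) * t) * Real.exp (c * t) ^ 2 = 1 := by
    rw [← Real.exp_nat_mul, ← Real.exp_add, Real.exp_eq_one_iff]; push_cast; ring
  refine le_of_pow_le_pow_left₀ two_ne_zero (by positivity) ?_
  calc ‖u t‖ ^ 2 = Real.exp (c * t) ^ 2 * (Real.exp (-(2 * c) * t) * ‖u t‖ ^ 2) := by
        rw [← mul_assoc, mul_comm (_ ^ 2), hexp, one_mul]
    _ ≤ Real.exp (c * t) ^ 2 * ‖u 0‖ ^ 2 := by gcongr
    _ = (Real.exp (c * t) * ‖u 0‖) ^ 2 := (mul_pow _ _ _).symm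

end

theorem contraction_of_uniformly_negative_jacobian_general
    {n : ℕ} (f : EuclideanSpace ℝ (Fin n) → EuclideanSpace ℝ (Fin n))
    (hf : ContDiff ℝ 1 f) (lam : ℝ)
    (hneg : ∀ x v : EuclideanSpace ℝ (Fin n), ⟪fderiv ℝ f x v, v⟫ ≤ -lam * ‖v‖ ^ 2)
    (x y : ℝ → EuclideanSpace ℝ (Fin n))
    (hx : ∀ t ∈ Set.Ici (0 : ℝ), HasDerivWithinAt x (f (x t)) (Set.Ici 0) t)
    (hy : ∀ t ∈ Set.Ici (0 : ℝ), HasDerivWithinAt y (f (y t)) (Set.Ici 0) t) :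
    ∀ t ∈ Set.Ici (0 : ℝ), ‖x t - y t‖ ≤ Real.exp (-lam * t) * ‖x 0 - y 0‖ :=
  norm_le_exp_mul_of_inner_deriv_le (fun t ht ↦ (hx t ht).sub (hy t ht)) fun t _ ↦ by
    rw [real_inner_comm]
    exact inner_sub_sub_le_of_inner_fderiv_le (hf.differentiable one_ne_zero) hneg _ _

/-- **Fundamental contraction theorem.**
If `f : ℝⁿ → ℝⁿ` is continuously differentiable and the symmetric part of its Jacobian is
uniformly negative definite, i.e. `(1/2)(Df(x) + Df(x)ᵀ) ≼ -λ Iₙ` for all `x` (equivalently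
`⟪Df(x) v, v⟫ ≤ -λ ‖v‖²` for all `x, v`), then any two solutions of `ż = f(z)` on `[0, ∞)`
approach each other exponentially at rate `λ`. -/
theorem contraction_of_uniformly_negative_jacobian
    {n : ℕ} (f : EuclideanSpace ℝ (Fin n) → EuclideanSpace ℝ (Fin n))
    (hf : ContDiff ℝ 1 f) (lam : ℝ) (hlam : 0 < lam)
    (hneg : ∀ x v : EuclideanSpace ℝ (Fin n), ⟪fderiv ℝ f x v, v⟫ ≤ -lam * ‖v‖ ^ 2)
    (x y : ℝ → EuclideanSpace ℝ (Fin n))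
    (hx : ∀ t ∈ Set.Ici (0 : ℝ), HasDerivWithinAt x (f (x t)) (Set.Ici 0) t)
    (hy : ∀ t ∈ Set.Ici (0 : ℝ), HasDerivWithinAt y (f (y t)) (Set.Ici 0) t) :
    ∀ t ∈ Set.Ici (0 : ℝ), ‖x t - y t‖ ≤ Real.exp (-lam * t) * ‖x 0 - y 0‖ :=
  contraction_of_uniformly_negative_jacobian_general f hf lam hneg x y hx hy
end

section
/- Let 𝒳 ⊆ ℝⁿ be open and connected, let m < n, and let W : 𝒳 → ℝ^{n×n} be continuously differentiable with symmetric values; write W_⊥(x) for the upper-left (n−m)×(n−m) block of W(x). Let 𝔟 : 𝒳 → ℝ^{m×m} be continuous with 𝔟(x) invertible for every x ∈ 𝒳, define B(x) ∈ ℝ^{n×m} to have zero first n−m rows and last m rows equal to 𝔟(x); assume B is continuously differentiable with columns b₁,…,b_m, and set B_⊥ = [I_{n−m}; 0_{m×(n−m)}] ∈ ℝ^{n×(n−m)}. Then the constraints B_⊥ᵀ( ∂_{b_j}W(x) − ( (∂b_j(x)/∂x) W(x) + W(x) (∂b_j(x)/∂x)ᵀ ) ) B_⊥ = 0 hold for all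 j = 1,…,m and all x ∈ 𝒳 if and only if every entry of W_⊥ has vanishing partial derivative with respect to each of the last m coordinates x^{(n−m)+1},…,x^{n}, at every x ∈ 𝒳. -/
open Matrix

attribute [local instance] Matrix.normedAddCommGroup Matrix.normedSpace

/-- The Jacobian matrix of `g` at `x`: entry `(i,j)` is `∂g^i/∂x^j`. -/
noncomputable def jacobian {n : ℕ} (g : (Fin n → ℝ) → (Fin n → ℝ)) (x : Fin n → ℝ) :
    Matrix (Fin n) (Fin n) ℝ :=
  Matrix.of fun i j => fderiv ℝ g x (Pi.single j 1) i

/-- The entrywise Lie derivative `∂_v M(x)`: entry `(i,j)` is the directional derivative of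
`M_{ij}` along the vector `v` at `x`. -/
noncomputable def lieDerivMatrix {n : ℕ} (M : (Fin n → ℝ) → Matrix (Fin n) (Fin n) ℝ)
    (v : Fin n → ℝ) (x : Fin n → ℝ) : Matrix (Fin n) (Fin n) ℝ :=
  Matrix.of fun i j => fderiv ℝ (fun y => M y i j) x v

/-- The annihilator `B_⊥ = [I_{n-m}; 0]` of the sparse input matrix. -/
def Bperp (n m : ℕ) : Matrix (Fin n) (Fin (n - m)) ℝ :=
  Matrix.of fun i k => if (i : ℕ) = (k : ℕ) then 1 else 0

/-! Because the top `n - m` components of each column `b_j` of `B` vanish identically, the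
corresponding rows of its Jacobian vanish, so sandwiching between `B_⊥ᵀ` and `B_⊥` (which reads
off the upper-left block) kills both Jacobian terms. What remains in entry `(p,q)` is
`∂_{b_j} W_{pq} = ∑ᵢ 𝔟ᵢⱼ ∂_{n-m+i} W_{pq}`, the `j`-th entry of the row vector
`(∂_{n-m+i} W_{pq})ᵢ` times `𝔟`. As `𝔟(x)` is invertible, all these entries vanish iff that
row vector does. -/

theorem fderiv_apply_eq_zero_of_forall_apply_eq {𝕜 E F ι : Type*} [NontriviallyNormedField 𝕜]
    [NormedAddCommGroup E] [NormedSpace 𝕜 E] [NormedAddCommGroup F] [NormedSpace 𝕜 F]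
    [Fintype ι] {g : E → ι → F} {i : ι} {c : F} (hc : ∀ y, g y i = c) (x v : E) :
    fderiv 𝕜 g x v i = 0 := by
  by_cases hg : DifferentiableAt 𝕜 g x
  · have hcomp := fderiv_apply hg i
    simp only [hc, fderiv_const_apply] at hcomp
    exact (DFunLike.congr_fun hcomp v).symm
  · rw [fderiv_zero_of_not_differentiableAt hg, _root_.zero_apply, Pi.zero_apply]

theorem ContinuousLinearMap.apply_eq_sum_mul_single {R ι : Type*} [Semiring R]
    [TopologicalSpace R] [Fintype ι] [DecidableEq ι] (L : (ι → R) →L[R] R) (v : ι → R) :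
    L v = ∑ k, v k * L (Pi.single k 1) := by
  conv_lhs => rw [← Finset.univ_sum_single v]
  simp only [map_sum]
  refine Finset.sum_congr rfl fun k _ => ?_
  rw [← smul_eq_mul, ← map_smul, ← Pi.single_smul', smul_eq_mul, mul_one]

theorem sum_eq_sum_tail_of_eq_zero_on_head {M : Type*} [AddCommMonoid M] {n m : ℕ}
    (hmn : m ≤ n) (f : Fin n → M) (hf : ∀ k : Fin n, (k : ℕ) < n - m → f k = 0) :
    ∑ k, f k = ∑ i : Fin m, f ⟨n - m + (i : ℕ), by omega⟩ := by
  refine (Fintype.sum_of_injective _ ?_ _ f ?_ fun _ => rfl).symm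
  · intro i i' h
    simpa [Fin.ext_iff] using h
  · intro k hk
    refine hf k (not_le.mp fun hle => hk ⟨⟨k - (n - m), by omega⟩, ?_⟩)
    ext
    simp only
    omega

theorem lieDerivMatrix_apply_of_head_eq_zero {n m : ℕ} (hmn : m ≤ n)
    (M : (Fin n → ℝ) → Matrix (Fin n) (Fin n) ℝ) (v x : Fin n → ℝ)
    (hv : ∀ k : Fin n, (k : ℕ) < n - m → v k = 0) (P Q : Fin n) :
    lieDerivMatrix M v x P Q = ∑ i : Fin m, v ⟨n - m + (i : ℕ), by omega⟩ *
      fderiv ℝ (fun y => M y P Q) x (Pi.single ⟨n - m + (i : ℕ), by omega⟩ 1) := by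
  rw [lieDerivMatrix, of_apply, ContinuousLinearMap.apply_eq_sum_mul_single]
  exact sum_eq_sum_tail_of_eq_zero_on_head hmn _ fun k hk => by rw [hv k hk, zero_mul]

theorem Bperp_transpose_mul_mul_Bperp_apply {n m : ℕ} (A : Matrix (Fin n) (Fin n) ℝ)
    (p q : Fin (n - m)) :
    ((Bperp n m)ᵀ * A * Bperp n m) p q = A ⟨p, by omega⟩ ⟨q, by omega⟩ := by
  have hcol : ∀ (k : Fin (n - m)) (i : Fin n),
      Bperp n m i k = if i = ⟨k, by omega⟩ then 1 else 0 := by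
    intro k i
    simp [Bperp, Fin.ext_iff]
  simp only [mul_apply, transpose_apply, hcol, ite_mul, mul_ite, one_mul, mul_one, zero_mul,
    mul_zero, Finset.sum_ite_eq', Finset.mem_univ, if_true]

theorem killing_constraint_apply {n m : ℕ} (hmn : m ≤ n)
    (W : (Fin n → ℝ) → Matrix (Fin n) (Fin n) ℝ)
    (b : (Fin n → ℝ) → Matrix (Fin m) (Fin m) ℝ) (B : (Fin n → ℝ) → Matrix (Fin n) (Fin m) ℝ)
    (hBtop : ∀ x, ∀ i : Fin n, ∀ j : Fin m, (i : ℕ) < n - m → B x i j = 0)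
    (hBbot : ∀ x, ∀ i : Fin m, ∀ j : Fin m,
      B x ⟨n - m + (i : ℕ), by omega⟩ j = b x i j)
    (j : Fin m) (x : Fin n → ℝ) (p q : Fin (n - m)) :
    ((Bperp n m)ᵀ *
        (lieDerivMatrix W (fun i => B x i j) x -
          (jacobian (fun y i => B y i j) x * W x +
            W x * (jacobian (fun y i => B y i j) x)ᵀ)) *
        Bperp n m) p q =
      ((fun i : Fin m => fderiv ℝ (fun y => W y ⟨p, by omega⟩ ⟨q, by omega⟩) x
        (Pi.single ⟨n - m + (i : ℕ), by omega⟩ 1)) ᵥ* b x) j := by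
  set J := jacobian (fun y i => B y i j) x
  have hJ : ∀ k : Fin n, (k : ℕ) < n - m → ∀ r, J k r = 0 := fun k hk r =>
    fderiv_apply_eq_zero_of_forall_apply_eq (g := fun y i => B y i j) (fun y => hBtop y k j hk) x _
  have hJW : (J * W x) ⟨p, by omega⟩ ⟨q, by omega⟩ = 0 := by
    rw [mul_apply]
    exact Finset.sum_eq_zero fun r _ => by rw [hJ _ p.isLt r, zero_mul]
  have hWJ : (W x * Jᵀ) ⟨p, by omega⟩ ⟨q, by omega⟩ = 0 := by
    rw [mul_apply]
    exact Finset.sum_eq_zero fun r _ => by rw [transpose_apply, hJ _ q.isLt r, mul_zero]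
  rw [Bperp_transpose_mul_mul_Bperp_apply, Matrix.sub_apply, Matrix.add_apply, hJW, hWJ,
    add_zero, sub_zero, lieDerivMatrix_apply_of_head_eq_zero hmn _ _ _ fun k hk => hBtop x k j hk,
    vecMul, dotProduct]
  simp only [hBbot, mul_comm]

/-- **Killing-field constraint for sparse input matrices.** For the input matrix
`B(x) = [0_{(n-m)×m}; 𝔟(x)]` with `𝔟(x)` invertible and annihilator `B_⊥ = [I_{n-m}; 0]`,
the CCM constraints `B_⊥ᵀ(∂_{b_j}W − ((∂b_j/∂x)W + W(∂b_j/∂x)ᵀ))B_⊥ = 0` hold for all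
`j` and all `x ∈ X` if and only if every entry of the upper-left `(n-m)×(n-m)` block of `W`
has vanishing partial derivative with respect to each of the last `m` coordinates at every
`x ∈ X`. -/
theorem killing_constraint_iff_block_independent
    {n m : ℕ} (hmn : m < n)
    (X : Set (Fin n → ℝ))
    (W : (Fin n → ℝ) → Matrix (Fin n) (Fin n) ℝ)
    (b : (Fin n → ℝ) → Matrix (Fin m) (Fin m) ℝ)
    (hbinv : ∀ x ∈ X, IsUnit (b x))
    (B : (Fin n → ℝ) → Matrix (Fin n) (Fin m) ℝ)
    (hBtop : ∀ x, ∀ i : Fin n, ∀ j : Fin m, (i : ℕ) < n - m → B x i j = 0)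
    (hBbot : ∀ x, ∀ i : Fin m, ∀ j : Fin m,
      B x ⟨n - m + (i : ℕ), by omega⟩ j = b x i j) :
    (∀ j : Fin m, ∀ x ∈ X,
        (Bperp n m)ᵀ *
          (lieDerivMatrix W (fun i => B x i j) x -
            (jacobian (fun y i => B y i j) x * W x +
              W x * (jacobian (fun y i => B y i j) x)ᵀ)) *
          Bperp n m = 0)
      ↔
    (∀ p q : Fin (n - m), ∀ i : Fin m, ∀ x ∈ X,
        fderiv ℝ (fun y => W y ⟨(p : ℕ), by omega⟩ ⟨(q : ℕ), by omega⟩) x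
          (Pi.single ⟨n - m + (i : ℕ), by omega⟩ 1) = 0) := by
  have hentry := killing_constraint_apply hmn.le W b B hBtop hBbot
  constructor
  · intro h p q i x hx
    have hrow : (fun i : Fin m => fderiv ℝ (fun y => W y ⟨p, by omega⟩ ⟨q, by omega⟩) x
        (Pi.single ⟨n - m + (i : ℕ), by omega⟩ 1)) ᵥ* b x = 0 := by
      funext j
      rw [← hentry]
      exact congr_fun₂ (h j x hx) p q
    have hinj := vecMul_injective_of_isUnit (hbinv x hx)
    exact congr_fun ((hinj.eq_iff' (zero_vecMul _)).mp hrow) i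
  · intro h j x hx
    ext p q
    rw [hentry, show (fun i : Fin m => _) = 0 from funext fun i => h p q i x hx, zero_vecMul]
    rfl
end

section
/- (Derivative Reproducing Property in Vector-Valued RKHS) Let 𝒳 ⊆ ℝⁿ be open, and let H_K be an ℝⁿ-valued reproducing kernel Hilbert space on 𝒳 with operator-valued reproducing kernel K ∈ C²(𝒳 × 𝒳; ℝ^{n×n}). Then for every x ∈ 𝒳, y ∈ ℝⁿ, and j ∈ {1,…,n}: (a) the function ∂_j K_x y : z ↦ (∂K(z,s)/∂s^j |_{s=x}) y belongs to H_K; and (b) every f ∈ H_K is differentiable at x and satisfies the derivative reproducing property ⟨∂f(x)/∂x^j, y⟩ = ⟨f, ∂_j K_x y⟩_{H_K}. -/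
open Matrix
open scoped RealInnerProductSpace

attribute [local instance] Matrix.normedAddCommGroup Matrix.normedSpace

/-!
Through the reproducing property, everything reduces to the differentiability of the feature map
`a ↦ K_a y` into `H`, whose Gram function `(a, b) ↦ ⟨K(b, a) y, y⟩` is `C²`. A map `G` into a
Hilbert space whose Gram increments `⟪G (x + u) - G x, G (x + v) - G x⟫` agree with a bounded
bilinear form `B u v` up to `o(‖u‖ ‖v‖)` is differentiable at `x`: the difference quotients in
each direction `k` are Cauchy, their limits `D k` satisfy `⟪D h, D k⟫ = B h k`, which forces `D`
to be linear and bounded, and expanding `‖G (x + h) - G x - D h‖²` shows that it is `o(‖h‖²)`.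
For a `C²` Gram function, `B` is the mixed second derivative, by the mean value inequality. Both
parts of the theorem then follow by differentiating `a ↦ ⟪f, K_a y⟫ = ⟨f(a), y⟩`.
-/

open Filter Metric
open scoped Topology

theorem abs_inv_mul_sub {t : ℝ} (ht : t ≠ 0) (a b : ℝ) :
    |t⁻¹ * a - b| = |t|⁻¹ * |a - t * b| := by
  rw [← abs_inv, ← abs_mul, mul_sub, inv_mul_cancel_left₀ ht]

theorem ContDiffAt.exists_norm_fderiv_sub_fderiv_sub_le {E F : Type*} [NormedAddCommGroup E]
    [NormedSpace ℝ E] [NormedAddCommGroup F] [NormedSpace ℝ F] {Ψ : E → F} {p : E}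
    (hΨ : ContDiffAt ℝ 2 Ψ p) {ε : ℝ} (hε : 0 < ε) :
    ∃ δ > 0, (∀ q ∈ ball p δ, DifferentiableAt ℝ Ψ q) ∧ ∀ q ∈ ball p δ, ∀ r ∈ ball p δ,
      ‖fderiv ℝ Ψ q - fderiv ℝ Ψ r - fderiv ℝ (fderiv ℝ Ψ) p (q - r)‖ ≤ ε * ‖q - r‖ := by
  have hstrict : HasStrictFDerivAt (fderiv ℝ Ψ) (fderiv ℝ (fderiv ℝ Ψ) p) p :=
    (hΨ.fderiv_right (m := 1) le_rfl).hasStrictFDerivAt one_ne_zero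
  have hdiff : ∀ᶠ qr : E × E in 𝓝 (p, p), DifferentiableAt ℝ Ψ qr.1 :=
    (continuous_fst.tendsto (p, p)).eventually
      ((hΨ.eventually (by simp)).mono fun q hq => hq.differentiableAt two_ne_zero)
  obtain ⟨δ, hδ, hball⟩ := Metric.eventually_nhds_iff_ball.1
    (hdiff.and ((hasStrictFDerivAt_iff_isLittleO.1 hstrict).def hε))
  have hpair : ∀ q ∈ ball p δ, ∀ r ∈ ball p δ, (q, r) ∈ ball (p, p) δ := fun q hq r hr => by
    rw [mem_ball, Prod.dist_eq]
    exact max_lt hq hr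
  exact ⟨δ, hδ, fun q hq => (hball _ (hpair q hq q hq)).1,
    fun q hq r hr => (hball _ (hpair q hq r hr)).2⟩

section MixedDifference

variable {E₁ E₂ F : Type*} [NormedAddCommGroup E₁] [NormedSpace ℝ E₁]
  [NormedAddCommGroup E₂] [NormedSpace ℝ E₂] [NormedAddCommGroup F] [NormedSpace ℝ F]

theorem norm_mixedDifference_sub_le {Ψ : E₁ × E₂ → F} {a : E₁} {b : E₂} {δ ε : ℝ}
    {Q : E₁ × E₂ →L[ℝ] E₁ × E₂ →L[ℝ] F} (hd : ∀ q ∈ ball (a, b) δ, DifferentiableAt ℝ Ψ q)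
    (hQ : ∀ q ∈ ball (a, b) δ, ∀ r ∈ ball (a, b) δ,
      ‖fderiv ℝ Ψ q - fderiv ℝ Ψ r - Q (q - r)‖ ≤ ε * ‖q - r‖)
    {u : E₁} {v : E₂} (hu : ‖u‖ < δ) (hv : ‖v‖ < δ) :
    ‖Ψ (a + u, b + v) - Ψ (a + u, b) - Ψ (a, b + v) + Ψ (a, b) - Q (u, 0) (0, v)‖
      ≤ ε * ‖u‖ * ‖v‖ := by
  set inr := ContinuousLinearMap.inr ℝ E₁ E₂
  have hmem : ∀ s : E₁, ‖s‖ < δ → ∀ w ∈ ball b δ, (a + s, w) ∈ ball (a, b) δ :=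
    fun s hs w hw => by
      rw [mem_ball, Prod.dist_eq, dist_eq_norm (a + s), add_sub_cancel_left]
      exact max_lt hs hw
  have hmem₀ : ∀ w ∈ ball b δ, (a, w) ∈ ball (a, b) δ := fun w hw => by
    simpa using hmem 0 (by simpa using (norm_nonneg u).trans_lt hu) w hw
  -- mean value inequality for `w ↦ Ψ (a + u, w) - Ψ (a, w)`, whose derivative stays within
  -- `ε * ‖u‖` of `Q (u, 0) ∘ inr`
  have hderiv : ∀ w ∈ ball b δ, HasFDerivWithinAt (fun w => Ψ (a + u, w) - Ψ (a, w))
      ((fderiv ℝ Ψ (a + u, w) - fderiv ℝ Ψ (a, w)).comp inr) (ball b δ) w := fun w hw =>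
    (((hd _ (hmem u hu w hw)).hasFDerivAt.comp w (hasFDerivAt_prodMk_right _ w)).sub
      ((hd _ (hmem₀ w hw)).hasFDerivAt.comp w (hasFDerivAt_prodMk_right _ w))).hasFDerivWithinAt
  have hbound : ∀ w ∈ ball b δ,
      ‖(fderiv ℝ Ψ (a + u, w) - fderiv ℝ Ψ (a, w)).comp inr - (Q (u, 0)).comp inr‖
        ≤ ε * ‖u‖ := fun w hw => by
    have h := hQ _ (hmem u hu w hw) _ (hmem₀ w hw)
    simp only [Prod.mk_sub_mk, add_sub_cancel_left, sub_self, Prod.norm_mk, norm_zero,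
      max_eq_left (norm_nonneg u)] at h
    set T := fderiv ℝ Ψ (a + u, w) - fderiv ℝ Ψ (a, w) - Q (u, 0)
    rw [← ContinuousLinearMap.sub_comp]
    refine le_trans (ContinuousLinearMap.opNorm_le_bound _ (norm_nonneg T) fun w' => ?_) h
    simpa only [ContinuousLinearMap.comp_apply, ContinuousLinearMap.inr_apply, inr, Prod.norm_mk,
      norm_zero, max_eq_right (norm_nonneg w')] using T.le_opNorm (0, w')
  have hmvt := (convex_ball b δ).norm_image_sub_le_of_norm_hasFDerivWithin_le' hderiv hbound
    (mem_ball_self ((norm_nonneg v).trans_lt hv))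
    (by rwa [mem_ball, dist_eq_norm, add_sub_cancel_left])
  rw [add_sub_cancel_left] at hmvt
  convert hmvt using 2
  simp only [ContinuousLinearMap.comp_apply, ContinuousLinearMap.inr_apply, inr]
  abel

end MixedDifference

section Hilbert

variable {E H : Type*} [NormedAddCommGroup E] [NormedSpace ℝ E]
  [NormedAddCommGroup H] [InnerProductSpace ℝ H]

theorem cauchy_map_of_tendsto_inner {α : Type*} {l : Filter α} [l.NeBot] {f : α → H} {c : ℝ}
    (h : Tendsto (fun p : α × α => ⟪f p.1, f p.2⟫) (l ×ˢ l) (𝓝 c)) : Cauchy (map f l) := by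
  have hdiag : ∀ g : α × α → α, Tendsto g (l ×ˢ l) l →
      Tendsto (fun p => ⟪f (g p), f (g p)⟫) (l ×ˢ l) (𝓝 c) :=
    fun g hg => h.comp (hg.prodMk hg)
  have hsq : Tendsto (fun p : α × α => dist (f p.1) (f p.2) ^ 2) (l ×ˢ l) (𝓝 0) := by
    have := ((hdiag Prod.fst tendsto_fst).sub (h.const_mul 2)).add (hdiag Prod.snd tendsto_snd)
    convert this using 1
    · ext p
      rw [dist_eq_norm, norm_sub_sq_real, real_inner_self_eq_norm_sq, real_inner_self_eq_norm_sq]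
    · ring_nf
  rw [cauchy_map_iff', Metric.uniformity_eq_comap_nhds_zero, tendsto_comap_iff]
  simpa [Function.comp_def, Real.sqrt_sq dist_nonneg] using hsq.sqrt

theorem exists_continuousLinearMap_of_inner_eq (d : E → H) (B : E →L[ℝ] E →L[ℝ] ℝ)
    (h : ∀ u v, ⟪d u, d v⟫ = B u v) : ∃ D : E →L[ℝ] H, ⇑D = d := by
  -- a vector in the span of the range of `d` that is orthogonal to the range vanishes
  have hzero : ∀ u v (c : ℝ), d (c • u + v) = c • d u + d v := by
    intro u v c
    set z := d (c • u + v) - c • d u - d v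
    have horth : ∀ w, ⟪z, d w⟫ = 0 := fun w => by
      simp only [z, inner_sub_left, real_inner_smul_left, h, map_add, map_smul,
        _root_.add_apply, _root_.smul_apply, smul_eq_mul]
      ring
    have hz : ⟪z, z⟫ = 0 :=
      calc ⟪z, z⟫ = ⟪z, d (c • u + v)⟫ - c * ⟪z, d u⟫ - ⟪z, d v⟫ := by
            rw [← real_inner_smul_right, ← inner_sub_right, ← inner_sub_right]
        _ = 0 := by rw [horth, horth, horth]; ring
    rw [← sub_eq_zero, ← sub_sub]
    exact inner_self_eq_zero.1 hz
  have hd0 : d 0 = 0 := by simpa using hzero 0 0 1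
  refine ⟨LinearMap.mkContinuous
    { toFun := d
      map_add' := fun u v => by simpa using hzero u v 1
      map_smul' := fun c u => by simpa [hd0] using hzero u 0 c } (√‖B‖) fun u => ?_, rfl⟩
  change ‖d u‖ ≤ √‖B‖ * ‖u‖
  rw [← pow_le_pow_iff_left₀ (norm_nonneg _) (by positivity) two_ne_zero, mul_pow,
    Real.sq_sqrt (norm_nonneg B), ← real_inner_self_eq_norm_sq, h]
  calc B u u ≤ ‖B u u‖ := Real.le_norm_self _
    _ ≤ ‖B‖ * ‖u‖ * ‖u‖ := B.le_opNorm₂ u u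
    _ = ‖B‖ * ‖u‖ ^ 2 := by ring

theorem eventually_nhdsNE_zero_norm_smul_lt (v : E) {δ : ℝ} (hδ : 0 < δ) :
    ∀ᶠ t in 𝓝[≠] (0 : ℝ), t ≠ 0 ∧ ‖t • v‖ < δ := by
  have hcont : Tendsto (fun t : ℝ => ‖t • v‖) (𝓝 0) (𝓝 0) :=
    (continuous_id.smul continuous_const).norm.tendsto' 0 0 (by simp)
  exact (eventually_mem_nhdsWithin (a := 0) (s := {0}ᶜ)).and
    (nhdsWithin_le_nhds (hcont.eventually (gt_mem_nhds hδ)))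

def GramIncrementApprox (G : E → H) (x : E) (B : E →L[ℝ] E →L[ℝ] ℝ) : Prop :=
  ∀ ε > 0, ∃ δ > 0, ∀ u v, ‖u‖ < δ → ‖v‖ < δ →
    |⟪G (x + u) - G x, G (x + v) - G x⟫ - B u v| ≤ ε * ‖u‖ * ‖v‖

namespace GramIncrementApprox

variable {G : E → H} {x : E} {B : E →L[ℝ] E →L[ℝ] ℝ}

theorem abs_inner_slope_sub_le (hG : GramIncrementApprox G x B) {ε : ℝ} (hε : 0 < ε) :
    ∃ δ > 0, ∀ u k (t : ℝ), t ≠ 0 → ‖u‖ < δ → ‖t • k‖ < δ →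
      |⟪G (x + u) - G x, t⁻¹ • (G (x + t • k) - G x)⟫ - B u k| ≤ ε * ‖u‖ * ‖k‖ := by
  obtain ⟨δ, hδ, hbound⟩ := hG ε hε
  refine ⟨δ, hδ, fun u k t ht hu htk => ?_⟩
  calc _ = |t|⁻¹ * |⟪G (x + u) - G x, G (x + t • k) - G x⟫ - B u (t • k)| := by
        rw [real_inner_smul_right, abs_inv_mul_sub ht, map_smul, smul_eq_mul]
    _ ≤ |t|⁻¹ * (ε * ‖u‖ * ‖t • k‖) := by gcongr; exact hbound u _ hu htk
    _ = ε * ‖u‖ * ‖k‖ := by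
        rw [norm_smul, Real.norm_eq_abs]
        field_simp

theorem tendsto_inner_slope_slope (hG : GramIncrementApprox G x B) (h k : E) :
    Tendsto (fun p : ℝ × ℝ =>
        ⟪p.1⁻¹ • (G (x + p.1 • h) - G x), p.2⁻¹ • (G (x + p.2 • k) - G x)⟫)
      (𝓝[≠] 0 ×ˢ 𝓝[≠] 0) (𝓝 (B h k)) := by
  rw [Metric.tendsto_nhds]
  intro ε hε
  obtain ⟨δ, hδ, hbound⟩ := hG.abs_inner_slope_sub_le (ε := ε / (‖h‖ * ‖k‖ + 1)) (by positivity)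
  filter_upwards [(eventually_nhdsNE_zero_norm_smul_lt h hδ).prod_mk
    (eventually_nhdsNE_zero_norm_smul_lt k hδ)] with ⟨s, t⟩ ⟨⟨hs, hsh⟩, ⟨ht, htk⟩⟩
  calc dist _ (B h k)
      = |s|⁻¹ * |⟪G (x + s • h) - G x, t⁻¹ • (G (x + t • k) - G x)⟫ - B (s • h) k| := by
        rw [Real.dist_eq, real_inner_smul_left, abs_inv_mul_sub hs, map_smul,
          _root_.smul_apply, smul_eq_mul]
    _ ≤ |s|⁻¹ * (ε / (‖h‖ * ‖k‖ + 1) * ‖s • h‖ * ‖k‖) := by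
        gcongr; exact hbound _ k t ht hsh htk
    _ = ε * (‖h‖ * ‖k‖) / (‖h‖ * ‖k‖ + 1) := by
        rw [norm_smul, Real.norm_eq_abs]
        field_simp
    _ < ε := by
        rw [div_lt_iff₀ (by positivity)]
        nlinarith

theorem lineDifferentiableAt [CompleteSpace H] (hG : GramIncrementApprox G x B) (k : E) :
    LineDifferentiableAt ℝ G x k := by
  obtain ⟨d, hd⟩ := cauchy_map_iff_exists_tendsto.1
    (cauchy_map_of_tendsto_inner (f := fun t : ℝ => t⁻¹ • (G (x + t • k) - G x))
      (hG.tendsto_inner_slope_slope k k))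
  exact (hasLineDerivAt_iff_tendsto_slope_zero.2 hd).lineDifferentiableAt

theorem tendsto_slope_lineDeriv [CompleteSpace H] (hG : GramIncrementApprox G x B) (k : E) :
    Tendsto (fun t : ℝ => t⁻¹ • (G (x + t • k) - G x)) (𝓝[≠] 0) (𝓝 (lineDeriv ℝ G x k)) :=
  hasLineDerivAt_iff_tendsto_slope_zero.1 (hG.lineDifferentiableAt k).hasLineDerivAt

theorem inner_lineDeriv_lineDeriv [CompleteSpace H] (hG : GramIncrementApprox G x B) (h k : E) :
    ⟪lineDeriv ℝ G x h, lineDeriv ℝ G x k⟫ = B h k :=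
  tendsto_nhds_unique (((hG.tendsto_slope_lineDeriv h).comp tendsto_fst).inner
    ((hG.tendsto_slope_lineDeriv k).comp tendsto_snd)) (hG.tendsto_inner_slope_slope h k)

theorem abs_inner_lineDeriv_sub_le [CompleteSpace H] (hG : GramIncrementApprox G x B) {ε : ℝ}
    (hε : 0 < ε) : ∃ δ > 0, ∀ u k, ‖u‖ < δ →
      |⟪G (x + u) - G x, lineDeriv ℝ G x k⟫ - B u k| ≤ ε * ‖u‖ * ‖k‖ := by
  obtain ⟨δ, hδ, hbound⟩ := hG.abs_inner_slope_sub_le hε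
  refine ⟨δ, hδ, fun u k hu => le_of_tendsto
    ((tendsto_const_nhds.inner (hG.tendsto_slope_lineDeriv k)).sub_const (B u k)).abs ?_⟩
  filter_upwards [eventually_nhdsNE_zero_norm_smul_lt k hδ] with t ⟨ht, htk⟩
  exact hbound u k t ht hu htk

theorem differentiableAt [CompleteSpace H] (hG : GramIncrementApprox G x B) :
    DifferentiableAt ℝ G x := by
  obtain ⟨D, hD⟩ := exists_continuousLinearMap_of_inner_eq _ B hG.inner_lineDeriv_lineDeriv
  refine ⟨D, ?_⟩
  rw [hasFDerivAt_iff_isLittleO_nhds_zero, Asymptotics.isLittleO_iff]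
  intro c hc
  obtain ⟨δ₁, hδ₁, hgram⟩ := hG (c ^ 2 / 3) (by positivity)
  obtain ⟨δ₂, hδ₂, hcross⟩ := hG.abs_inner_lineDeriv_sub_le (ε := c ^ 2 / 3) (by positivity)
  filter_upwards [ball_mem_nhds (0 : E) (lt_min hδ₁ hδ₂)] with h hh
  rw [mem_ball_zero_iff, lt_min_iff] at hh
  have e₁ := abs_le.1 (hgram h h hh.1 hh.1)
  have e₂ := abs_le.1 (hcross h h hh.2)
  have hsq : ‖G (x + h) - G x - D h‖ ^ 2 ≤ (c * ‖h‖) ^ 2 := by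
    rw [← real_inner_self_eq_norm_sq, real_inner_sub_sub_self, hD,
      hG.inner_lineDeriv_lineDeriv h h]
    nlinarith
  exact (pow_le_pow_iff_left₀ (norm_nonneg _) (by positivity) two_ne_zero).1 hsq

end GramIncrementApprox

end Hilbert

section GramFunction

variable {E H : Type*} [NormedAddCommGroup E] [NormedSpace ℝ E]
  [NormedAddCommGroup H] [InnerProductSpace ℝ H]

theorem differentiableAt_of_contDiffAt_inner [CompleteSpace H] {F : E → H} {Ψ : E × E → ℝ}
    {x : E} (hΨ : ContDiffAt ℝ 2 Ψ (x, x)) (hF : ∀ᶠ p in 𝓝 (x, x), Ψ p = ⟪F p.1, F p.2⟫) :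
    DifferentiableAt ℝ F x := by
  refine GramIncrementApprox.differentiableAt (B := (fderiv ℝ (fderiv ℝ Ψ) (x, x)).bilinearComp
    (.inl ℝ E E) (.inr ℝ E E)) fun ε hε => ?_
  obtain ⟨δ₁, hδ₁, hd, hQ⟩ := hΨ.exists_norm_fderiv_sub_fderiv_sub_le hε
  obtain ⟨δ₂, hδ₂, hgram⟩ := Metric.eventually_nhds_iff_ball.1 hF
  have hΨF : ∀ s t : E, ‖s‖ < δ₂ → ‖t‖ < δ₂ → Ψ (x + s, x + t) = ⟪F (x + s), F (x + t)⟫ :=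
    fun s t hs ht => hgram _ <| by
      rw [mem_ball, Prod.dist_eq, dist_eq_norm, dist_eq_norm, add_sub_cancel_left,
        add_sub_cancel_left]
      exact max_lt hs ht
  refine ⟨min δ₁ δ₂, lt_min hδ₁ hδ₂, fun u v hu hv => ?_⟩
  rw [lt_min_iff] at hu hv
  have h₀ : ‖(0 : E)‖ < δ₂ := by rwa [norm_zero]
  have key : ⟪F (x + u) - F x, F (x + v) - F x⟫ =
      Ψ (x + u, x + v) - Ψ (x + u, x) - Ψ (x, x + v) + Ψ (x, x) := by
    have h₁ := hΨF u 0 hu.2 h₀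
    have h₂ := hΨF 0 v h₀ hv.2
    have h₃ := hΨF 0 0 h₀ h₀
    rw [add_zero] at h₁ h₂ h₃
    rw [hΨF u v hu.2 hv.2, h₁, h₂, h₃, inner_sub_left, inner_sub_right, inner_sub_right]
    ring
  rw [key, ← Real.norm_eq_abs]
  exact norm_mixedDifference_sub_le hd hQ hu.1 hv.1

theorem HasFDerivAt.apply_eq_inner_fderiv {F : E → H} {x : E} (hF : DifferentiableAt ℝ F x)
    {f : H} {φ : E → ℝ} {φ' : E →L[ℝ] ℝ} (hφ : HasFDerivAt φ φ' x)
    (heq : φ =ᶠ[𝓝 x] fun a => ⟪f, F a⟫) (v : E) : φ' v = ⟪f, fderiv ℝ F x v⟫ := by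
  rw [hφ.unique (((innerSL ℝ f).hasFDerivAt.comp x hF.hasFDerivAt).congr_of_eventuallyEq heq)]
  rfl

end GramFunction

section ReproducingKernel

variable {E m H : Type*} [Fintype m] [NormedAddCommGroup H] [InnerProductSpace ℝ H]
  {X : Set E} {ι : H → E → m → ℝ} {K : E → E → Matrix m m ℝ} {Ksec : E → (m → ℝ) → H}

noncomputable def dotProductCLM (w : m → ℝ) : (m → ℝ) →L[ℝ] ℝ :=
  LinearMap.toContinuousLinearMap ((dotProductBilin ℝ ℝ).flip w)

noncomputable def mulVecCLM (y : m → ℝ) : Matrix m m ℝ →L[ℝ] (m → ℝ) :=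
  LinearMap.toContinuousLinearMap ((mulVecBilin ℝ ℝ).flip y)

theorem inner_kernelSection_kernelSection
    (hsec : ∀ x ∈ X, ∀ y : m → ℝ, ∀ z ∈ X, ι (Ksec x y) z = K z x *ᵥ y)
    (hrep : ∀ f : H, ∀ x ∈ X, ∀ y : m → ℝ, ι f x ⬝ᵥ y = ⟪f, Ksec x y⟫)
    {a b : E} (ha : a ∈ X) (hb : b ∈ X) (y w : m → ℝ) :
    ⟪Ksec a y, Ksec b w⟫ = (K b a *ᵥ y) ⬝ᵥ w := by
  rw [← hrep _ b hb, hsec a ha y b hb]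

theorem differentiableAt_kernelSection [NormedAddCommGroup E] [NormedSpace ℝ E]
    [CompleteSpace H] (hX : IsOpen X)
    (hK : ContDiffOn ℝ 2 (fun p : E × E => K p.1 p.2) (X ×ˢ X))
    (hsec : ∀ x ∈ X, ∀ y : m → ℝ, ∀ z ∈ X, ι (Ksec x y) z = K z x *ᵥ y)
    (hrep : ∀ f : H, ∀ x ∈ X, ∀ y : m → ℝ, ι f x ⬝ᵥ y = ⟪f, Ksec x y⟫)
    {x : E} (hx : x ∈ X) (y : m → ℝ) : DifferentiableAt ℝ (fun a => Ksec a y) x := by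
  have hXX : X ×ˢ X ∈ 𝓝 (x, x) := (hX.prod hX).mem_nhds ⟨hx, hx⟩
  refine differentiableAt_of_contDiffAt_inner
    (Ψ := fun p => (dotProductCLM y ∘L mulVecCLM y) (K p.2 p.1)) ?_ ?_
  · exact (ContinuousLinearMap.contDiff _).comp_contDiffAt _
      ((hK.contDiffAt hXX).comp (x, x) (contDiff_snd.prodMk contDiff_fst).contDiffAt)
  · filter_upwards [hXX] with p hp
    exact (inner_kernelSection_kernelSection hsec hrep hp.1 hp.2 y y).symm

theorem differentiableAt_of_reproducing [NormedAddCommGroup E] [NormedSpace ℝ E] {x : E}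
    (hX : X ∈ 𝓝 x) (hrep : ∀ f : H, ∀ x ∈ X, ∀ y : m → ℝ, ι f x ⬝ᵥ y = ⟪f, Ksec x y⟫)
    (hF : ∀ y, DifferentiableAt ℝ (fun a => Ksec a y) x) (f : H) :
    DifferentiableAt ℝ (ι f) x := by
  classical
  refine differentiableAt_pi.2 fun i => ((innerSL ℝ f).differentiableAt.comp x
    (hF (Pi.single i 1))).congr_of_eventuallyEq ?_
  filter_upwards [hX] with a ha
  rw [Function.comp_apply, innerSL_apply_apply, ← hrep f a ha, dotProduct_single, mul_one]

end ReproducingKernel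

theorem vector_rkhs_derivative_reproducing_general
    {n : ℕ} (X : Set (Fin n → ℝ)) (hX : IsOpen X)
    (H : Type) [NormedAddCommGroup H] [InnerProductSpace ℝ H] [CompleteSpace H]
    (ι : H →ₗ[ℝ] ((Fin n → ℝ) → (Fin n → ℝ)))
    (K : (Fin n → ℝ) → (Fin n → ℝ) → Matrix (Fin n) (Fin n) ℝ)
    (hK : ContDiffOn ℝ 2 (fun p : (Fin n → ℝ) × (Fin n → ℝ) => K p.1 p.2) (X ×ˢ X))
    (Ksec : (Fin n → ℝ) → (Fin n → ℝ) → H)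
    (hsec : ∀ x ∈ X, ∀ y : Fin n → ℝ, ∀ z ∈ X, ι (Ksec x y) z = (K z x).mulVec y)
    (hrep : ∀ f : H, ∀ x ∈ X, ∀ y : Fin n → ℝ, ι f x ⬝ᵥ y = ⟪f, Ksec x y⟫) :
    ∀ x ∈ X, ∀ y : Fin n → ℝ, ∀ j : Fin n,
      ∃ g : H,
        (∀ z ∈ X, ι g z = (fderiv ℝ (fun s => K z s) x (Pi.single j 1)).mulVec y) ∧
        ∀ f : H, DifferentiableAt ℝ (ι f) x ∧
          fderiv ℝ (ι f) x (Pi.single j 1) ⬝ᵥ y = ⟪f, g⟫ := by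
  intro x hx y j
  have hF := differentiableAt_kernelSection hX hK hsec hrep hx
  refine ⟨fderiv ℝ (fun a => Ksec a y) x (Pi.single j 1), fun z hz => ?_, fun f => ?_⟩
  · have hKz : DifferentiableAt ℝ (fun s => K z s) x :=
      ((hK.comp (contDiff_const.prodMk contDiff_id).contDiffOn fun s hs => ⟨hz, hs⟩).contDiffAt
        (hX.mem_nhds hx)).differentiableAt two_ne_zero
    refine dotProduct_eq _ _ fun w => ?_
    have hpair := (dotProductCLM w ∘L mulVecCLM y).hasFDerivAt.comp x hKz.hasFDerivAt
    rw [hrep _ z hz, real_inner_comm]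
    refine (hpair.apply_eq_inner_fderiv (hF y) ?_ _).symm
    filter_upwards [hX.mem_nhds hx] with a ha
    rw [real_inner_comm]
    exact (inner_kernelSection_kernelSection hsec hrep ha hz y w).symm
  · have hdiff := differentiableAt_of_reproducing (hX.mem_nhds hx) hrep hF f
    refine ⟨hdiff, ((dotProductCLM y).hasFDerivAt.comp x hdiff.hasFDerivAt).apply_eq_inner_fderiv
      (hF y) ?_ _⟩
    filter_upwards [hX.mem_nhds hx] with a ha
    exact hrep f a ha y

/-- **Derivative reproducing property in a vector-valued RKHS** (Micheli–Glaunès).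
Let `H` be an `ℝⁿ`-valued RKHS on an open set `X ⊆ ℝⁿ`, realized via an injective linear
embedding `ι` into functions, with operator-valued reproducing kernel `K` of class `C²` on
`X × X` (sections `Ksec x y` represent `z ↦ K(z,x)y`, and the reproducing property holds).
Then for every `x ∈ X`, `y ∈ ℝⁿ` and coordinate `j`, the derivative section
`z ↦ (∂K(z,s)/∂s^j |_{s=x}) y` belongs to `H`, every `f ∈ H` is differentiable at `x`, and
`⟨∂(ι f)(x)/∂x^j, y⟩ = ⟪f, ∂_j K_x y⟫_H`. -/
theorem vector_rkhs_derivative_reproducing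
    {n : ℕ} (X : Set (Fin n → ℝ)) (hX : IsOpen X)
    (H : Type) [NormedAddCommGroup H] [InnerProductSpace ℝ H] [CompleteSpace H]
    (ι : H →ₗ[ℝ] ((Fin n → ℝ) → (Fin n → ℝ))) (hι : Function.Injective ι)
    (K : (Fin n → ℝ) → (Fin n → ℝ) → Matrix (Fin n) (Fin n) ℝ)
    (hK : ContDiffOn ℝ 2 (fun p : (Fin n → ℝ) × (Fin n → ℝ) => K p.1 p.2) (X ×ˢ X))
    (hKsym : ∀ x ∈ X, ∀ z ∈ X, (K x z)ᵀ = K z x)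
    (Ksec : (Fin n → ℝ) → (Fin n → ℝ) → H)
    (hsec : ∀ x ∈ X, ∀ y : Fin n → ℝ, ∀ z ∈ X, ι (Ksec x y) z = (K z x).mulVec y)
    (hrep : ∀ f : H, ∀ x ∈ X, ∀ y : Fin n → ℝ, ι f x ⬝ᵥ y = ⟪f, Ksec x y⟫) :
    ∀ x ∈ X, ∀ y : Fin n → ℝ, ∀ j : Fin n,
      ∃ g : H,
        (∀ z ∈ X, ι g z = (fderiv ℝ (fun s => K z s) x (Pi.single j 1)).mulVec y) ∧
        ∀ f : H, DifferentiableAt ℝ (ι f) x ∧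
          fderiv ℝ (ι f) x (Pi.single j 1) ⬝ᵥ y = ⟪f, g⟫ :=
  vector_rkhs_derivative_reproducing_general X hX H ι K hK Ksec hsec hrep
end

section
/- (Representer Theorem for f, B) Let 𝒳 ⊆ ℝⁿ be open, let H_K^f and H_K^B be ℝⁿ-valued reproducing kernel Hilbert spaces on 𝒳 with C² reproducing kernels K^f and K^B (satisfying the reproducing and derivative reproducing properties), and suppose every g ∈ H_K^B has g^j(x) = 0 for j = 1,…,n−m and all x. Given data (x_i, u_i, ẋ_i), i = 1,…,N, constraint points X_c = {x₁,…,x_{N_c}} ⊇ {x₁,…,x_N}, μ_f, μ_b > 0, λ > 0, and a fixed continuously differentiable symmetric-matrix-valued W : 𝒳 → ℝ^{n×n}, consider minimizing J_d(f, B) = Σ_{i=1}^{N} ‖ f(x_i) + Σ_j u_i^j b_j(x_i) − ẋ_i ‖² + μ_f‖f‖²_{H_K^f} + μ_b Σ_j ‖b_j‖²_{H_K^B} over f ∈ H_K^f, b₁,…,b_m ∈ H_K^B, subject to ℱ_λ(x_i; f, W) ≼ 0 for every x_i ∈ X_c, where ℱ_λ(x; f, W) = B_⊥ᵀ( −∂_f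 W(x) + (∂f(x)/∂x)W(x) + W(x)(∂f(x)/∂x)ᵀ + 2λ W(x) ) B_⊥ with B_⊥ = [I_{n−m}; 0_{m×(n−m)}]. If the feasible set is nonempty, then there exist unique minimizers f*, b₁*,…,b_m*, and they satisfy f* ∈ V_f and b_j* ∈ V_B for all j, where V_f = { Σ_{i=1}^{N_c} K^f_{x_i} a_i + Σ_{i=1}^{N_c} Σ_{p=1}^{n} ∂_p K^f_{x_i} a'_{ip} : a_i, a'_{ip} ∈ ℝⁿ } and V_B is defined analogously with kernel K^B. -/
open Matrix
open scoped RealInnerProductSpace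

attribute [local instance] Matrix.normedAddCommGroup Matrix.normedSpace

/-- The stabilizability matrix
`ℱ_λ(x; g, W) = B_⊥ᵀ(−∂_g W + (∂g/∂x)W + W(∂g/∂x)ᵀ + 2λW)B_⊥`. -/
noncomputable def Fstab {n : ℕ} (m : ℕ) (lam : ℝ)
    (W : (Fin n → ℝ) → Matrix (Fin n) (Fin n) ℝ)
    (g : (Fin n → ℝ) → (Fin n → ℝ)) (x : Fin n → ℝ) :
    Matrix (Fin (n - m)) (Fin (n - m)) ℝ :=
  (Bperp n m)ᵀ *
    (-(lieDerivMatrix W (g x) x) + jacobian g x * W x + W x * (jacobian g x)ᵀ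
      + (2 * lam) • W x) * Bperp n m

/-- The regularized dynamics-fitting loss `J_d`. -/
noncomputable def dynLoss {n m N : ℕ} {Hf HB : Type}
    [NormedAddCommGroup Hf] [InnerProductSpace ℝ Hf]
    [NormedAddCommGroup HB] [InnerProductSpace ℝ HB]
    (ιf : Hf →ₗ[ℝ] ((Fin n → ℝ) → (Fin n → ℝ)))
    (ιB : HB →ₗ[ℝ] ((Fin n → ℝ) → (Fin n → ℝ)))
    (xd : Fin N → Fin n → ℝ) (ud : Fin N → Fin m → ℝ) (xdotd : Fin N → Fin n → ℝ)
    (μf μb : ℝ) (f : Hf) (b : Fin m → HB) : ℝ :=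
  (∑ i : Fin N,
    ((ιf f (xd i) + (∑ j : Fin m, ud i j • ιB (b j) (xd i)) - xdotd i) ⬝ᵥ
     (ιf f (xd i) + (∑ j : Fin m, ud i j • ιB (b j) (xd i)) - xdotd i)))
  + μf * ‖f‖ ^ 2 + μb * ∑ j : Fin m, ‖b j‖ ^ 2

/-!
The regulariser `μ_f‖f‖² + μ_b ∑ ‖b_j‖²` satisfies the parallelogram law and the data term is a sum
of squares of affine functions of `(f, b)`, so `J_d` is strongly convex along midpoints. The map
`f ↦ (f(x_k), ∂f(x_k))` is continuous and linear, because its coordinates are inner products with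
kernel sections, and `ℱ_λ` is affine in these data; hence the feasible set is closed and convex. A
minimising sequence is then Cauchy, and its limit is the unique minimiser.

The sections are linear in their vector argument, so `V_f` and `V_B` are finite dimensional.
Orthogonal projection onto them keeps every value and Jacobian at the constraint points, hence
feasibility and the data term, and does not increase norms. So the projected minimiser is again a
minimiser and by uniqueness equals the minimiser.
-/

open Filter Topology

section StrongMidpointConvex

variable {E : Type*} [NormedAddCommGroup E] [Module ℝ E] {s : Set E} {J : E → ℝ} {c : ℝ}

lemma cauchySeq_of_tendsto_of_midpoint (hc : 0 < c)
    (hmid : ∀ x ∈ s, ∀ y ∈ s, midpoint ℝ x y ∈ s)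
    (hconv : ∀ x ∈ s, ∀ y ∈ s, J (midpoint ℝ x y) + c * ‖x - y‖ ^ 2 ≤ (J x + J y) / 2)
    {a : ℝ} (hlow : ∀ x ∈ s, a ≤ J x) {u : ℕ → E} (hu : ∀ k, u k ∈ s)
    (hJu : Tendsto (fun k => J (u k)) atTop (𝓝 a)) : CauchySeq u := by
  refine Metric.cauchySeq_iff'.2 fun ε hε => ?_
  obtain ⟨N, hN⟩ := eventually_atTop.1 <|
    hJu.eventually (gt_mem_nhds (lt_add_of_pos_right a (by positivity : 0 < c * ε ^ 2)))
  refine ⟨N, fun k hk => ?_⟩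
  have hsq : c * ‖u k - u N‖ ^ 2 < c * ε ^ 2 := by
    have := hconv _ (hu k) _ (hu N)
    have := hlow _ (hmid _ (hu k) _ (hu N))
    linarith [hN k hk, hN N le_rfl]
  rw [dist_eq_norm]
  exact lt_of_pow_lt_pow_left₀ 2 hε.le (lt_of_mul_lt_mul_left hsq hc.le)

theorem exists_unique_isMinOn_of_midpoint [CompleteSpace E] (hc : 0 < c) (hs : IsClosed s)
    (hne : s.Nonempty) (hmid : ∀ x ∈ s, ∀ y ∈ s, midpoint ℝ x y ∈ s) (hJ : ContinuousOn J s)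
    (hbdd : BddBelow (J '' s))
    (hconv : ∀ x ∈ s, ∀ y ∈ s, J (midpoint ℝ x y) + c * ‖x - y‖ ^ 2 ≤ (J x + J y) / 2) :
    ∃! x, x ∈ s ∧ IsMinOn J s x := by
  have hlow : ∀ x ∈ s, sInf (J '' s) ≤ J x := fun x hx => csInf_le hbdd (Set.mem_image_of_mem J hx)
  obtain ⟨v, -, hv, hvJ⟩ := exists_seq_tendsto_sInf (hne.image J) hbdd
  choose u hu hJu using hvJ
  have hJu' : Tendsto (fun k => J (u k)) atTop (𝓝 (sInf (J '' s))) := by simpa only [hJu] using hv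
  obtain ⟨x, hx⟩ := cauchySeq_tendsto_of_complete
    (cauchySeq_of_tendsto_of_midpoint hc hmid hconv hlow hu hJu')
  have hxs : x ∈ s := hs.mem_of_tendsto hx (Eventually.of_forall hu)
  have hJx : J x = sInf (J '' s) :=
    tendsto_nhds_unique
      ((hJ x hxs).tendsto.comp (tendsto_nhdsWithin_iff.2 ⟨hx, .of_forall hu⟩)) hJu'
  refine ⟨x, ⟨hxs, fun y hy => hJx ▸ hlow y hy⟩, fun y ⟨hys, hy⟩ => ?_⟩
  have hymid : J y ≤ J (midpoint ℝ y x) := hy (hmid y hys x hxs)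
  have hsq : c * ‖y - x‖ ^ 2 ≤ 0 := by linarith [hconv y hys x hxs, hy hxs, hJx ▸ hlow y hys]
  have hyx : ‖y - x‖ ^ 2 = 0 := le_antisymm (nonpos_of_mul_nonpos_right hsq hc) (by positivity)
  simpa [sub_eq_zero] using hyx

end StrongMidpointConvex

lemma dotProduct_self_nonneg {ι : Type*} [Fintype ι] (v : ι → ℝ) : 0 ≤ v ⬝ᵥ v :=
  Finset.sum_nonneg fun i _ => mul_self_nonneg (v i)

lemma dotProduct_self_midpoint_add {ι : Type*} [Fintype ι] (a b : ι → ℝ) :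
    midpoint ℝ a b ⬝ᵥ midpoint ℝ a b + (a - b) ⬝ᵥ (a - b) / 4 = (a ⬝ᵥ a + b ⬝ᵥ b) / 2 := by
  simp only [midpoint_eq_smul_add, invOf_eq_inv, dotProduct_smul, smul_dotProduct, add_dotProduct,
    dotProduct_add, sub_dotProduct, dotProduct_sub, dotProduct_comm b a, smul_eq_mul]
  ring

lemma norm_midpoint_sq_add {E : Type*} [NormedAddCommGroup E] [InnerProductSpace ℝ E] (a b : E) :
    ‖midpoint ℝ a b‖ ^ 2 + ‖a - b‖ ^ 2 / 4 = (‖a‖ ^ 2 + ‖b‖ ^ 2) / 2 := by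
  have h := parallelogram_law_with_norm ℝ a b
  rw [midpoint_eq_smul_add, norm_smul, invOf_eq_inv, Real.norm_of_nonneg (by norm_num)]
  nlinarith

lemma norm_sq_le_norm_fst_sq_add_sum {E F ι : Type*} [SeminormedAddCommGroup E]
    [SeminormedAddCommGroup F] [Fintype ι] (z : E × (ι → F)) :
    ‖z‖ ^ 2 ≤ ‖z.1‖ ^ 2 + ∑ j, ‖z.2 j‖ ^ 2 := by
  have hsum : 0 ≤ ∑ j, ‖z.2 j‖ ^ 2 := Finset.sum_nonneg fun j _ => sq_nonneg _
  have hle : ‖z‖ ≤ √(‖z.1‖ ^ 2 + ∑ j, ‖z.2 j‖ ^ 2) := by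
    refine max_le (Real.le_sqrt_of_sq_le (by linarith))
      ((pi_norm_le_iff_of_nonneg (Real.sqrt_nonneg _)).2 fun j => Real.le_sqrt_of_sq_le ?_)
    have := Finset.single_le_sum (fun j _ => sq_nonneg ‖z.2 j‖) (Finset.mem_univ j)
    linarith [sq_nonneg ‖z.1‖]
  calc ‖z‖ ^ 2 ≤ √(‖z.1‖ ^ 2 + ∑ j, ‖z.2 j‖ ^ 2) ^ 2 := pow_le_pow_left₀ (norm_nonneg _) hle 2
    _ = _ := Real.sq_sqrt (by positivity)

section Reproducing

variable {n : ℕ} {H : Type*} [NormedAddCommGroup H] [InnerProductSpace ℝ H]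

/-- `s` reproduces the vector-valued functional `g`: `g f ⬝ᵥ y = ⟪f, s y⟫`. With `g f = f x` this
is the reproducing property of `K_x`, with `g f = ∂f(x)/∂x^j` the derivative reproducing property
of `∂_j K_x`. -/
def IsReproducing (g : H → Fin n → ℝ) (s : (Fin n → ℝ) → H) : Prop :=
  ∀ f y, g f ⬝ᵥ y = ⟪f, s y⟫

namespace IsReproducing

variable {g : H → Fin n → ℝ} {s : (Fin n → ℝ) → H}

lemma eq_inner (hg : IsReproducing g s) : g = fun f p => ⟪f, s (Pi.single p 1)⟫ := by
  funext f p
  simpa using hg f (Pi.single p 1)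

lemma continuous (hg : IsReproducing g s) : Continuous g := by
  rw [hg.eq_inner]
  exact continuous_pi fun p => continuous_id.inner continuous_const

lemma map_midpoint (hg : IsReproducing g s) (f u : H) :
    g (midpoint ℝ f u) = midpoint ℝ (g f) (g u) := by
  rw [hg.eq_inner]
  funext p
  simp [midpoint_eq_smul_add, inner_smul_left, inner_add_left, mul_add]

lemma apply_starProjection (hg : IsReproducing g s) {V : Submodule ℝ H}
    [V.HasOrthogonalProjection] (hs : ∀ y, s y ∈ V) (f : H) : g (V.starProjection f) = g f := by
  rw [hg.eq_inner]
  funext p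
  change ⟪V.starProjection f, s (Pi.single p 1)⟫ = ⟪f, s (Pi.single p 1)⟫
  rw [V.inner_starProjection_left_eq_right, V.starProjection_eq_self_iff.2 (hs _)]

lemma eq_sum_smul_single (hg : IsReproducing g s) (y : Fin n → ℝ) :
    s y = ∑ p, y p • s (Pi.single p 1) := by
  refine ext_inner_left ℝ fun f => ?_
  simp only [inner_sum, inner_smul_right, ← hg f y, hg.eq_inner, dotProduct, mul_comm]

lemma mem_span_range (hg : IsReproducing g s) (y : Fin n → ℝ) :
    s y ∈ Submodule.span ℝ (Set.range fun p => s (Pi.single p 1)) :=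
  hg.eq_sum_smul_single y ▸ Submodule.sum_mem _ fun p _ =>
    Submodule.smul_mem _ _ (Submodule.subset_span ⟨p, rfl⟩)

end IsReproducing

lemma finiteDimensional_span_of_isReproducing {A : Type*} [Finite A] {g : A → H → Fin n → ℝ}
    {s : A → (Fin n → ℝ) → H} (hg : ∀ a, IsReproducing (g a) (s a)) {S : Set H}
    (hS : ∀ h ∈ S, ∃ a y, h = s a y) : FiniteDimensional ℝ (Submodule.span ℝ S) := by
  have hle : Submodule.span ℝ S
      ≤ Submodule.span ℝ (Set.range fun q : A × Fin n => s q.1 (Pi.single q.2 1)) := by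
    refine Submodule.span_le.2 fun h hh => ?_
    obtain ⟨a, y, rfl⟩ := hS h hh
    exact Submodule.span_mono (Set.range_subset_iff.2 fun p => Set.mem_range_self (a, p))
      ((hg a).mem_span_range y)
  have := FiniteDimensional.span_of_finite ℝ (Set.finite_range
    fun q : A × Fin n => s q.1 (Pi.single q.2 1))
  exact Submodule.finiteDimensional_of_le hle

def sectionSpan {Nc : ℕ} (xs : Fin Nc → Fin n → ℝ) (Ksec : (Fin n → ℝ) → (Fin n → ℝ) → H)
    (Kder : (Fin n → ℝ) → Fin n → (Fin n → ℝ) → H) : Submodule ℝ H :=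
  Submodule.span ℝ
    ({h | ∃ (k : Fin Nc) (y : Fin n → ℝ), h = Ksec (xs k) y} ∪
     {h | ∃ (k : Fin Nc) (p : Fin n) (y : Fin n → ℝ), h = Kder (xs k) p y})

variable {Nc : ℕ} {xs : Fin Nc → Fin n → ℝ} {Ksec : (Fin n → ℝ) → (Fin n → ℝ) → H}
  {Kder : (Fin n → ℝ) → Fin n → (Fin n → ℝ) → H}

lemma sec_mem_sectionSpan (k : Fin Nc) (y : Fin n → ℝ) : Ksec (xs k) y ∈ sectionSpan xs Ksec Kder :=
  Submodule.subset_span (Set.mem_union_left _ ⟨k, y, rfl⟩)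

lemma der_mem_sectionSpan (k : Fin Nc) (p : Fin n) (y : Fin n → ℝ) :
    Kder (xs k) p y ∈ sectionSpan xs Ksec Kder :=
  Submodule.subset_span (Set.mem_union_right _ ⟨k, p, y, rfl⟩)

lemma finiteDimensional_sectionSpan {gv : Fin Nc → H → Fin n → ℝ}
    {gd : Fin Nc → Fin n → H → Fin n → ℝ} (hval : ∀ k, IsReproducing (gv k) (Ksec (xs k)))
    (hder : ∀ k j, IsReproducing (gd k j) (Kder (xs k) j)) :
    FiniteDimensional ℝ (sectionSpan xs Ksec Kder) := by
  rw [sectionSpan, Submodule.span_union]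
  have := finiteDimensional_span_of_isReproducing hval
    (S := {h | ∃ (k : Fin Nc) (y : Fin n → ℝ), h = Ksec (xs k) y}) fun _ hh => hh
  have := finiteDimensional_span_of_isReproducing (A := Fin Nc × Fin n) (fun q => hder q.1 q.2)
    (S := {h | ∃ (k : Fin Nc) (p : Fin n) (y : Fin n → ℝ), h = Kder (xs k) p y})
    fun _ ⟨k, p, y, hh⟩ => ⟨(k, p), y, hh⟩
  infer_instance

end Reproducing

section Jacobian

variable {n : ℕ} {H : Type*} [NormedAddCommGroup H] [InnerProductSpace ℝ H]
  {φ : H → (Fin n → ℝ) → Fin n → ℝ} {x : Fin n → ℝ} {s : Fin n → (Fin n → ℝ) → H}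

lemma continuous_jacobian_of_isReproducing
    (hφ : ∀ j, IsReproducing (fun f => fderiv ℝ (φ f) x (Pi.single j 1)) (s j)) :
    Continuous fun f => jacobian (φ f) x :=
  continuous_pi fun i => continuous_pi fun j => (continuous_apply i).comp (hφ j).continuous

lemma jacobian_midpoint_of_isReproducing
    (hφ : ∀ j, IsReproducing (fun f => fderiv ℝ (φ f) x (Pi.single j 1)) (s j)) (f u : H) :
    jacobian (φ (midpoint ℝ f u)) x = midpoint ℝ (jacobian (φ f) x) (jacobian (φ u) x) := by
  ext i j
  have := congrFun ((hφ j).map_midpoint f u) i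
  simpa only [jacobian, Matrix.of_apply, midpoint_eq_smul_add, Matrix.smul_apply, Matrix.add_apply,
    Pi.smul_apply, Pi.add_apply] using this

lemma jacobian_starProjection_of_isReproducing
    (hφ : ∀ j, IsReproducing (fun f => fderiv ℝ (φ f) x (Pi.single j 1)) (s j))
    {V : Submodule ℝ H} [V.HasOrthogonalProjection] (hs : ∀ j y, s j y ∈ V) (f : H) :
    jacobian (φ (V.starProjection f)) x = jacobian (φ f) x := by
  ext i j
  exact congrFun ((hφ j).apply_starProjection (hs j) f) i

end Jacobian

section Stabilizability

variable {n : ℕ} (m : ℕ) (lam : ℝ) (W : (Fin n → ℝ) → Matrix (Fin n) (Fin n) ℝ)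

lemma Fstab_congr {g g' : (Fin n → ℝ) → Fin n → ℝ} {x : Fin n → ℝ} (hv : g x = g' x)
    (hJ : jacobian g x = jacobian g' x) : Fstab m lam W g x = Fstab m lam W g' x := by
  rw [Fstab, Fstab, hv, hJ]

lemma lieDerivMatrix_midpoint (v₁ v₂ x : Fin n → ℝ) :
    lieDerivMatrix W (midpoint ℝ v₁ v₂) x
      = midpoint ℝ (lieDerivMatrix W v₁ x) (lieDerivMatrix W v₂ x) := by
  ext i j
  simp [lieDerivMatrix, midpoint_eq_smul_add, mul_add]

lemma Fstab_midpoint {g g₁ g₂ : (Fin n → ℝ) → Fin n → ℝ} {x : Fin n → ℝ}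
    (hv : g x = midpoint ℝ (g₁ x) (g₂ x))
    (hJ : jacobian g x = midpoint ℝ (jacobian g₁ x) (jacobian g₂ x)) :
    Fstab m lam W g x = midpoint ℝ (Fstab m lam W g₁ x) (Fstab m lam W g₂ x) := by
  rw [Fstab, hv, hJ, lieDerivMatrix_midpoint]
  simp only [Fstab, midpoint_eq_smul_add, invOf_eq_inv, Matrix.smul_mul, Matrix.mul_smul,
    Matrix.add_mul, Matrix.mul_add, Matrix.transpose_add, Matrix.transpose_smul, smul_add,
    smul_neg, Matrix.neg_mul, Matrix.mul_neg]
  module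

lemma continuous_Fstab {E : Type*} [TopologicalSpace E] {φ : E → (Fin n → ℝ) → Fin n → ℝ}
    {x : Fin n → ℝ} (hv : Continuous fun e => φ e x) (hJ : Continuous fun e => jacobian (φ e) x) :
    Continuous fun e => Fstab m lam W (φ e) x := by
  have hL : Continuous fun e => lieDerivMatrix W (φ e x) x :=
    continuous_pi fun i => continuous_pi fun j => (fderiv ℝ (fun y => W y i j) x).continuous.comp hv
  unfold Fstab
  fun_prop

lemma isClosed_setOf_forall_dotProduct_mulVec_nonpos {ι : Type*} [Fintype ι] :
    IsClosed {M : Matrix ι ι ℝ | ∀ v, v ⬝ᵥ M *ᵥ v ≤ 0} := by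
  simp only [Set.ofPred_forall]
  exact isClosed_iInter fun v => isClosed_le
    (continuous_const.dotProduct (continuous_id.matrix_mulVec continuous_const)) continuous_const

lemma convex_setOf_forall_dotProduct_mulVec_nonpos {ι : Type*} [Fintype ι] :
    Convex ℝ {M : Matrix ι ι ℝ | ∀ v, v ⬝ᵥ M *ᵥ v ≤ 0} := by
  intro M hM N hN a b ha hb _ v
  simp only [Matrix.add_mulVec, Matrix.smul_mulVec, dotProduct_add, dotProduct_smul, smul_eq_mul]
  nlinarith [mul_nonpos_of_nonneg_of_nonpos ha (hM v), mul_nonpos_of_nonneg_of_nonpos hb (hN v)]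

end Stabilizability

section Feasibility

variable {n Nc : ℕ} (m : ℕ) (lam : ℝ) (W : (Fin n → ℝ) → Matrix (Fin n) (Fin n) ℝ)
  (xs : Fin Nc → Fin n → ℝ)

def IsStabFeasible (g : (Fin n → ℝ) → Fin n → ℝ) : Prop :=
  ∀ k v, v ⬝ᵥ (Fstab m lam W g (xs k)) *ᵥ v ≤ 0

variable {m lam W xs} {H : Type*} [NormedAddCommGroup H] [InnerProductSpace ℝ H]
  {φ : H → (Fin n → ℝ) → Fin n → ℝ} {Ksec : (Fin n → ℝ) → (Fin n → ℝ) → H}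
  {Kder : (Fin n → ℝ) → Fin n → (Fin n → ℝ) → H}

lemma isClosed_setOf_isStabFeasible (hval : ∀ k, IsReproducing (fun f => φ f (xs k)) (Ksec (xs k)))
    (hjac : ∀ k j, IsReproducing (fun f => fderiv ℝ (φ f) (xs k) (Pi.single j 1)) (Kder (xs k) j)) :
    IsClosed {f | IsStabFeasible m lam W xs (φ f)} := by
  have hset : {f | IsStabFeasible m lam W xs (φ f)} = ⋂ k,
      (fun f => Fstab m lam W (φ f) (xs k)) ⁻¹' {M | ∀ v, v ⬝ᵥ M *ᵥ v ≤ 0} := by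
    ext f
    simp [IsStabFeasible]
  rw [hset]
  exact isClosed_iInter fun k => isClosed_setOf_forall_dotProduct_mulVec_nonpos.preimage
    (continuous_Fstab m lam W (hval k).continuous (continuous_jacobian_of_isReproducing (hjac k)))

lemma IsStabFeasible.midpoint (hval : ∀ k, IsReproducing (fun f => φ f (xs k)) (Ksec (xs k)))
    (hjac : ∀ k j, IsReproducing (fun f => fderiv ℝ (φ f) (xs k) (Pi.single j 1)) (Kder (xs k) j))
    {f u : H} (hf : IsStabFeasible m lam W xs (φ f)) (hu : IsStabFeasible m lam W xs (φ u)) :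
    IsStabFeasible m lam W xs (φ (midpoint ℝ f u)) := fun k => by
  rw [Fstab_midpoint m lam W ((hval k).map_midpoint f u)
    (jacobian_midpoint_of_isReproducing (hjac k) f u)]
  exact convex_setOf_forall_dotProduct_mulVec_nonpos.midpoint_mem (hf k) (hu k)

lemma IsStabFeasible.starProjection
    (hval : ∀ k, IsReproducing (fun f => φ f (xs k)) (Ksec (xs k)))
    (hjac : ∀ k j, IsReproducing (fun f => fderiv ℝ (φ f) (xs k) (Pi.single j 1)) (Kder (xs k) j))
    {V : Submodule ℝ H} [V.HasOrthogonalProjection] (hV : ∀ k y, Ksec (xs k) y ∈ V)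
    (hV' : ∀ k j y, Kder (xs k) j y ∈ V) {f : H} (hf : IsStabFeasible m lam W xs (φ f)) :
    IsStabFeasible m lam W xs (φ (V.starProjection f)) := fun k => by
  rw [Fstab_congr m lam W ((hval k).apply_starProjection (hV k) f)
    (jacobian_starProjection_of_isReproducing (hjac k) (hV' k) f)]
  exact hf k

end Feasibility

section Loss

variable {n m N Nc : ℕ} {Hf HB : Type} [NormedAddCommGroup Hf] [InnerProductSpace ℝ Hf]
  [NormedAddCommGroup HB] [InnerProductSpace ℝ HB]
  (ιf : Hf →ₗ[ℝ] ((Fin n → ℝ) → (Fin n → ℝ))) (ιB : HB →ₗ[ℝ] ((Fin n → ℝ) → (Fin n → ℝ)))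
  (xd : Fin N → Fin n → ℝ) (ud : Fin N → Fin m → ℝ) (xdotd : Fin N → Fin n → ℝ) {μf μb : ℝ}

lemma dynLoss_nonneg (hμf : 0 ≤ μf) (hμb : 0 ≤ μb) (f : Hf) (b : Fin m → HB) :
    0 ≤ dynLoss ιf ιB xd ud xdotd μf μb f b := by
  unfold dynLoss
  have := Finset.sum_nonneg fun i (_ : i ∈ Finset.univ) =>
    dotProduct_self_nonneg (ιf f (xd i) + ∑ j, ud i j • ιB (b j) (xd i) - xdotd i)
  positivity

lemma continuous_dynLoss (hf : ∀ i, Continuous fun f => ιf f (xd i))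
    (hB : ∀ i, Continuous fun g => ιB g (xd i)) :
    Continuous fun z : Hf × (Fin m → HB) => dynLoss ιf ιB xd ud xdotd μf μb z.1 z.2 := by
  unfold dynLoss
  fun_prop

lemma dynLoss_midpoint_add_le (f f' : Hf) (b b' : Fin m → HB) :
    dynLoss ιf ιB xd ud xdotd μf μb (midpoint ℝ f f') (midpoint ℝ b b')
        + (μf / 4 * ‖f - f'‖ ^ 2 + μb / 4 * ∑ j, ‖b j - b' j‖ ^ 2)
      ≤ (dynLoss ιf ιB xd ud xdotd μf μb f b + dynLoss ιf ιB xd ud xdotd μf μb f' b') / 2 := by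
  set r : Hf → (Fin m → HB) → Fin N → Fin n → ℝ :=
    fun f b i => ιf f (xd i) + ∑ j, ud i j • ιB (b j) (xd i) - xdotd i
  have hr (i) : r (midpoint ℝ f f') (midpoint ℝ b b') i = midpoint ℝ (r f b i) (r f' b' i) := by
    simp only [r, midpoint_eq_smul_add, invOf_eq_inv, Pi.smul_apply, Pi.add_apply, map_add,
      map_smul, smul_add, Finset.sum_add_distrib, smul_comm (ud i _), ← Finset.smul_sum]
    module
  have hsq (i) : r (midpoint ℝ f f') (midpoint ℝ b b') i ⬝ᵥ r (midpoint ℝ f f') (midpoint ℝ b b') i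
      ≤ (r f b i ⬝ᵥ r f b i + r f' b' i ⬝ᵥ r f' b' i) / 2 := by
    rw [hr, ← dotProduct_self_midpoint_add]
    linarith [dotProduct_self_nonneg (r f b i - r f' b' i)]
  have hsum := Finset.sum_le_sum fun i (_ : i ∈ Finset.univ) => hsq i
  have hb (j) : ‖midpoint ℝ b b' j‖ ^ 2 + ‖b j - b' j‖ ^ 2 / 4 = (‖b j‖ ^ 2 + ‖b' j‖ ^ 2) / 2 :=
    norm_midpoint_sq_add (b j) (b' j)
  have hbsum := Finset.sum_congr rfl fun j (_ : j ∈ Finset.univ) => hb j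
  simp only [Finset.sum_add_distrib, ← Finset.sum_div] at hsum hbsum
  unfold dynLoss
  linear_combination hsum + μf * norm_midpoint_sq_add f f' + μb * hbsum

lemma dynLoss_prod_midpoint_add_le (hμf : 0 ≤ μf) (hμb : 0 ≤ μb) (z z' : Hf × (Fin m → HB)) :
    dynLoss ιf ιB xd ud xdotd μf μb (midpoint ℝ z z').1 (midpoint ℝ z z').2
        + min μf μb / 4 * ‖z - z'‖ ^ 2
      ≤ (dynLoss ιf ιB xd ud xdotd μf μb z.1 z.2
          + dynLoss ιf ιB xd ud xdotd μf μb z'.1 z'.2) / 2 := by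
  have hsum : 0 ≤ ∑ j, ‖z.2 j - z'.2 j‖ ^ 2 := Finset.sum_nonneg fun j _ => sq_nonneg _
  have hnorm : min μf μb / 4 * ‖z - z'‖ ^ 2
      ≤ μf / 4 * ‖z.1 - z'.1‖ ^ 2 + μb / 4 * ∑ j, ‖z.2 j - z'.2 j‖ ^ 2 :=
    calc min μf μb / 4 * ‖z - z'‖ ^ 2
        ≤ min μf μb / 4 * (‖z.1 - z'.1‖ ^ 2 + ∑ j, ‖z.2 j - z'.2 j‖ ^ 2) := by
          gcongr
          exact norm_sq_le_norm_fst_sq_add_sum (z - z')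
      _ ≤ _ := by nlinarith [min_le_left μf μb, min_le_right μf μb, sq_nonneg ‖z.1 - z'.1‖]
  have hmid : midpoint ℝ z z' = (midpoint ℝ z.1 z'.1, midpoint ℝ z.2 z'.2) := rfl
  rw [hmid]
  linarith [dynLoss_midpoint_add_le ιf ιB xd ud xdotd z.1 z'.1 z.2 z'.2 (μf := μf) (μb := μb)]

lemma dynLoss_le_of_apply_eq_of_norm_le (hμf : 0 ≤ μf) (hμb : 0 ≤ μb) {f f' : Hf}
    {b b' : Fin m → HB} (hf : ∀ i, ιf f' (xd i) = ιf f (xd i))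
    (hb : ∀ i j, ιB (b' j) (xd i) = ιB (b j) (xd i)) (hnf : ‖f'‖ ≤ ‖f‖)
    (hnb : ∀ j, ‖b' j‖ ≤ ‖b j‖) :
    dynLoss ιf ιB xd ud xdotd μf μb f' b' ≤ dynLoss ιf ιB xd ud xdotd μf μb f b := by
  unfold dynLoss
  simp only [hf, hb]
  gcongr with j
  exact hnb j

theorem exists_unique_isMinOn_dynLoss [CompleteSpace Hf] [CompleteSpace HB] {lam : ℝ}
    {W : (Fin n → ℝ) → Matrix (Fin n) (Fin n) ℝ} {xs : Fin Nc → Fin n → ℝ}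
    {Ksec : (Fin n → ℝ) → (Fin n → ℝ) → Hf} {Kder : (Fin n → ℝ) → Fin n → (Fin n → ℝ) → Hf}
    (hμf : 0 < μf) (hμb : 0 < μb)
    (hval : ∀ k, IsReproducing (fun f => ιf f (xs k)) (Ksec (xs k)))
    (hjac : ∀ k j, IsReproducing (fun f => fderiv ℝ (ιf f) (xs k) (Pi.single j 1)) (Kder (xs k) j))
    (hcontf : ∀ i, Continuous fun f => ιf f (xd i)) (hcontB : ∀ i, Continuous fun g => ιB g (xd i))
    (hne : ∃ f, IsStabFeasible m lam W xs (ιf f)) :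
    ∃! z : Hf × (Fin m → HB), z ∈ {z | IsStabFeasible m lam W xs (ιf z.1)} ∧
      IsMinOn (fun z => dynLoss ιf ιB xd ud xdotd μf μb z.1 z.2)
        {z | IsStabFeasible m lam W xs (ιf z.1)} z :=
  exists_unique_isMinOn_of_midpoint (by positivity : 0 < min μf μb / 4)
    ((isClosed_setOf_isStabFeasible hval hjac).preimage continuous_fst)
    (hne.elim fun f hf => ⟨(f, 0), hf⟩)
    (fun _ hz _ hz' => IsStabFeasible.midpoint hval hjac hz hz')
    (continuous_dynLoss ιf ιB xd ud xdotd hcontf hcontB).continuousOn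
    ⟨0, Set.forall_mem_image.2 fun z _ => dynLoss_nonneg ιf ιB xd ud xdotd hμf.le hμb.le z.1 z.2⟩
    (fun z _ z' _ => dynLoss_prod_midpoint_add_le ιf ιB xd ud xdotd hμf.le hμb.le z z')

lemma dynLoss_starProjection_le (hμf : 0 ≤ μf) (hμb : 0 ≤ μb) {Vf : Submodule ℝ Hf}
    {VB : Submodule ℝ HB} [Vf.HasOrthogonalProjection] [VB.HasOrthogonalProjection]
    {Ksecf : (Fin n → ℝ) → (Fin n → ℝ) → Hf} {KsecB : (Fin n → ℝ) → (Fin n → ℝ) → HB}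
    (hvalf : ∀ i, IsReproducing (fun f => ιf f (xd i)) (Ksecf (xd i)))
    (hvalB : ∀ i, IsReproducing (fun g => ιB g (xd i)) (KsecB (xd i)))
    (hsecf : ∀ i y, Ksecf (xd i) y ∈ Vf) (hsecB : ∀ i y, KsecB (xd i) y ∈ VB)
    (f : Hf) (b : Fin m → HB) :
    dynLoss ιf ιB xd ud xdotd μf μb (Vf.starProjection f) (fun j => VB.starProjection (b j))
      ≤ dynLoss ιf ιB xd ud xdotd μf μb f b :=
  dynLoss_le_of_apply_eq_of_norm_le ιf ιB xd ud xdotd hμf hμb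
    (fun i => (hvalf i).apply_starProjection (hsecf i) f)
    (fun i j => (hvalB i).apply_starProjection (hsecB i) (b j))
    (Vf.norm_starProjection_apply_le f) fun j => VB.norm_starProjection_apply_le (b j)

lemma mem_sectionSpan_of_unique_isMinOn {lam : ℝ}
    {W : (Fin n → ℝ) → Matrix (Fin n) (Fin n) ℝ} {xs : Fin Nc → Fin n → ℝ}
    {Ksecf : (Fin n → ℝ) → (Fin n → ℝ) → Hf} {Kderf : (Fin n → ℝ) → Fin n → (Fin n → ℝ) → Hf}
    {KsecB : (Fin n → ℝ) → (Fin n → ℝ) → HB} {KderB : (Fin n → ℝ) → Fin n → (Fin n → ℝ) → HB}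
    (hμf : 0 ≤ μf) (hμb : 0 ≤ μb) (hsub : ∀ i, ∃ k, xd i = xs k)
    (hvalf : ∀ k, IsReproducing (fun f => ιf f (xs k)) (Ksecf (xs k)))
    (hjacf : ∀ k j,
      IsReproducing (fun f => fderiv ℝ (ιf f) (xs k) (Pi.single j 1)) (Kderf (xs k) j))
    (hvalB : ∀ k, IsReproducing (fun g => ιB g (xs k)) (KsecB (xs k)))
    (hjacB : ∀ k j,
      IsReproducing (fun g => fderiv ℝ (ιB g) (xs k) (Pi.single j 1)) (KderB (xs k) j))
    {z : Hf × (Fin m → HB)} (hz : IsStabFeasible m lam W xs (ιf z.1))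
    (hmin : IsMinOn (fun z => dynLoss ιf ιB xd ud xdotd μf μb z.1 z.2)
      {z | IsStabFeasible m lam W xs (ιf z.1)} z)
    (huniq : ∀ z', z' ∈ {z | IsStabFeasible m lam W xs (ιf z.1)} ∧
      IsMinOn (fun z => dynLoss ιf ιB xd ud xdotd μf μb z.1 z.2)
        {z | IsStabFeasible m lam W xs (ιf z.1)} z' → z' = z) :
    z.1 ∈ sectionSpan xs Ksecf Kderf ∧ ∀ j, z.2 j ∈ sectionSpan xs KsecB KderB := by
  have := finiteDimensional_sectionSpan hvalf hjacf
  have := finiteDimensional_sectionSpan hvalB hjacB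
  have hproj : ((sectionSpan xs Ksecf Kderf).starProjection z.1,
      fun j => (sectionSpan xs KsecB KderB).starProjection (z.2 j)) = z :=
    huniq _ ⟨IsStabFeasible.starProjection hvalf hjacf sec_mem_sectionSpan der_mem_sectionSpan hz,
      isMinOn_iff.2 fun z' hz' => (dynLoss_starProjection_le ιf ιB xd ud xdotd hμf hμb
        (fun i => (hsub i).elim fun k hk => hk ▸ hvalf k)
        (fun i => (hsub i).elim fun k hk => hk ▸ hvalB k)
        (fun i y => (hsub i).elim fun k hk => hk ▸ sec_mem_sectionSpan k y)
        (fun i y => (hsub i).elim fun k hk => hk ▸ sec_mem_sectionSpan k y) z.1 z.2).trans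
        (isMinOn_iff.1 hmin z' hz')⟩
  rw [← hproj]
  exact ⟨Submodule.starProjection_apply_mem _ _, fun j => Submodule.starProjection_apply_mem _ _⟩

end Loss

theorem representer_theorem_dynamics_general
    {n m N Nc : ℕ} (X : Set (Fin n → ℝ))
    (Hf HB : Type)
    [NormedAddCommGroup Hf] [InnerProductSpace ℝ Hf] [CompleteSpace Hf]
    [NormedAddCommGroup HB] [InnerProductSpace ℝ HB] [CompleteSpace HB]
    (ιf : Hf →ₗ[ℝ] ((Fin n → ℝ) → (Fin n → ℝ)))
    (ιB : HB →ₗ[ℝ] ((Fin n → ℝ) → (Fin n → ℝ)))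
    -- sections, reproducing and derivative-reproducing properties for `H_K^f`
    (Ksecf : (Fin n → ℝ) → (Fin n → ℝ) → Hf)
    (hrepf : ∀ f : Hf, ∀ x ∈ X, ∀ y : Fin n → ℝ, ιf f x ⬝ᵥ y = ⟪f, Ksecf x y⟫)
    (Kderf : (Fin n → ℝ) → Fin n → (Fin n → ℝ) → Hf)
    (hderrepf : ∀ f : Hf, ∀ x ∈ X, ∀ p : Fin n, ∀ y : Fin n → ℝ,
      fderiv ℝ (ιf f) x (Pi.single p 1) ⬝ᵥ y = ⟪f, Kderf x p y⟫)
    -- sections, reproducing and derivative-reproducing properties for `H_K^B`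
    (KsecB : (Fin n → ℝ) → (Fin n → ℝ) → HB)
    (hrepB : ∀ g : HB, ∀ x ∈ X, ∀ y : Fin n → ℝ, ιB g x ⬝ᵥ y = ⟪g, KsecB x y⟫)
    (KderB : (Fin n → ℝ) → Fin n → (Fin n → ℝ) → HB)
    (hderrepB : ∀ g : HB, ∀ x ∈ X, ∀ p : Fin n, ∀ y : Fin n → ℝ,
      fderiv ℝ (ιB g) x (Pi.single p 1) ⬝ᵥ y = ⟪g, KderB x p y⟫)
    -- data and constraint points
    (xd : Fin N → Fin n → ℝ) (ud : Fin N → Fin m → ℝ) (xdotd : Fin N → Fin n → ℝ)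
    (xs : Fin Nc → Fin n → ℝ) (hxs : ∀ k, xs k ∈ X)
    (hsub : ∀ i : Fin N, ∃ k : Fin Nc, xd i = xs k)
    (μf μb lam : ℝ) (hμf : 0 < μf) (hμb : 0 < μb)
    -- the fixed dual metric
    (W : (Fin n → ℝ) → Matrix (Fin n) (Fin n) ℝ)
    -- the spanned subspaces
    (Vf : Submodule ℝ Hf) (VB : Submodule ℝ HB)
    (hVf : Vf = Submodule.span ℝ
      ({h | ∃ (k : Fin Nc) (y : Fin n → ℝ), h = Ksecf (xs k) y} ∪
       {h | ∃ (k : Fin Nc) (p : Fin n) (y : Fin n → ℝ), h = Kderf (xs k) p y}))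
    (hVB : VB = Submodule.span ℝ
      ({h | ∃ (k : Fin Nc) (y : Fin n → ℝ), h = KsecB (xs k) y} ∪
       {h | ∃ (k : Fin Nc) (p : Fin n) (y : Fin n → ℝ), h = KderB (xs k) p y}))
    -- feasibility predicate: the pointwise-relaxed stabilizability LMIs
    (Feas : Hf → Prop)
    (hFeas : ∀ f : Hf, Feas f ↔ ∀ k : Fin Nc, ∀ v : Fin (n - m) → ℝ,
      v ⬝ᵥ (Fstab m lam W (ιf f) (xs k)).mulVec v ≤ 0)
    -- the feasible set is nonempty
    (hne : ∃ f : Hf, Feas f) :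
    ∃ (fstar : Hf) (bstar : Fin m → HB),
      (Feas fstar ∧
        ∀ (f : Hf) (b : Fin m → HB), Feas f →
          dynLoss ιf ιB xd ud xdotd μf μb fstar bstar ≤ dynLoss ιf ιB xd ud xdotd μf μb f b)
      ∧ fstar ∈ Vf ∧ (∀ j, bstar j ∈ VB)
      ∧ ∀ (f' : Hf) (b' : Fin m → HB),
          (Feas f' ∧ ∀ (f : Hf) (b : Fin m → HB), Feas f →
            dynLoss ιf ιB xd ud xdotd μf μb f' b' ≤ dynLoss ιf ιB xd ud xdotd μf μb f b) →
          f' = fstar ∧ b' = bstar := by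
  obtain rfl : Feas = fun f => IsStabFeasible m lam W xs (ιf f) :=
    funext fun f => propext (hFeas f)
  obtain rfl : Vf = sectionSpan xs Ksecf Kderf := hVf
  obtain rfl : VB = sectionSpan xs KsecB KderB := hVB
  have hvalf (x) (hx : x ∈ X) : IsReproducing (fun f => ιf f x) (Ksecf x) := (hrepf · x hx)
  have hjacf (x) (hx : x ∈ X) (j) :
      IsReproducing (fun f => fderiv ℝ (ιf f) x (Pi.single j 1)) (Kderf x j) := (hderrepf · x hx j)
  have hvalB (x) (hx : x ∈ X) : IsReproducing (fun g => ιB g x) (KsecB x) := (hrepB · x hx)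
  have hjacB (x) (hx : x ∈ X) (j) :
      IsReproducing (fun g => fderiv ℝ (ιB g) x (Pi.single j 1)) (KderB x j) := (hderrepB · x hx j)
  have hxd (i) : xd i ∈ X := (hsub i).elim fun k hk => hk ▸ hxs k
  obtain ⟨⟨fstar, bstar⟩, ⟨hfeas, hmin⟩, huniq⟩ := exists_unique_isMinOn_dynLoss ιf ιB xd ud xdotd
    hμf hμb (hvalf _ <| hxs ·) (hjacf _ <| hxs ·) (fun i => (hvalf _ (hxd i)).continuous)
    (fun i => (hvalB _ (hxd i)).continuous) hne
  obtain ⟨hfV, hbV⟩ := mem_sectionSpan_of_unique_isMinOn ιf ιB xd ud xdotd hμf.le hμb.le hsub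
    (hvalf _ <| hxs ·) (hjacf _ <| hxs ·) (hvalB _ <| hxs ·) (hjacB _ <| hxs ·) hfeas hmin huniq
  exact ⟨fstar, bstar, ⟨hfeas, fun f b hf => isMinOn_iff.1 hmin (f, b) hf⟩, hfV, hbV,
    fun f' b' ⟨hf', hmin'⟩ =>
      Prod.mk.inj (huniq (f', b') ⟨hf', isMinOn_iff.2 fun z hz => hmin' z.1 z.2 hz⟩)⟩

/-- **Representer theorem for the dynamics sub-problem.** Minimizing the regularized loss
`J_d` over `f ∈ H_K^f`, `b_j ∈ H_K^B` subject to the pointwise-relaxed stabilizability LMIs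
`ℱ_λ(x_i; f, W) ≼ 0` at the constraint points (with `W` fixed, and `H_K^B` consisting of
functions whose first `n−m` components vanish) admits, if feasible, unique minimizers
`f*, b_j*`, and these lie in the subspaces spanned by kernel sections and derivative-of-kernel
sections at the constraint points. -/
theorem representer_theorem_dynamics
    {n m N Nc : ℕ} (hm : m ≤ n) (X : Set (Fin n → ℝ)) (hX : IsOpen X)
    (Hf HB : Type)
    [NormedAddCommGroup Hf] [InnerProductSpace ℝ Hf] [CompleteSpace Hf]
    [NormedAddCommGroup HB] [InnerProductSpace ℝ HB] [CompleteSpace HB]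
    (ιf : Hf →ₗ[ℝ] ((Fin n → ℝ) → (Fin n → ℝ))) (hιf : Function.Injective ιf)
    (ιB : HB →ₗ[ℝ] ((Fin n → ℝ) → (Fin n → ℝ))) (hιB : Function.Injective ιB)
    -- sparsity of `H_K^B`: first `n−m` components vanish
    (hsparse : ∀ g : HB, ∀ x : Fin n → ℝ, ∀ j : Fin n, (j : ℕ) < n - m → ιB g x j = 0)
    (Kf KB : (Fin n → ℝ) → (Fin n → ℝ) → Matrix (Fin n) (Fin n) ℝ)
    (hKf : ContDiffOn ℝ 2 (fun p : (Fin n → ℝ) × (Fin n → ℝ) => Kf p.1 p.2) (X ×ˢ X))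
    (hKB : ContDiffOn ℝ 2 (fun p : (Fin n → ℝ) × (Fin n → ℝ) => KB p.1 p.2) (X ×ˢ X))
    -- sections, reproducing and derivative-reproducing properties for `H_K^f`
    (Ksecf : (Fin n → ℝ) → (Fin n → ℝ) → Hf)
    (hsecf : ∀ x ∈ X, ∀ y : Fin n → ℝ, ∀ z ∈ X, ιf (Ksecf x y) z = (Kf z x).mulVec y)
    (hrepf : ∀ f : Hf, ∀ x ∈ X, ∀ y : Fin n → ℝ, ιf f x ⬝ᵥ y = ⟪f, Ksecf x y⟫)
    (Kderf : (Fin n → ℝ) → Fin n → (Fin n → ℝ) → Hf)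
    (hdersecf : ∀ x ∈ X, ∀ p : Fin n, ∀ y : Fin n → ℝ, ∀ z ∈ X,
      ιf (Kderf x p y) z = (fderiv ℝ (fun s => Kf z s) x (Pi.single p 1)).mulVec y)
    (hdifff : ∀ f : Hf, ∀ x ∈ X, DifferentiableAt ℝ (ιf f) x)
    (hderrepf : ∀ f : Hf, ∀ x ∈ X, ∀ p : Fin n, ∀ y : Fin n → ℝ,
      fderiv ℝ (ιf f) x (Pi.single p 1) ⬝ᵥ y = ⟪f, Kderf x p y⟫)
    -- sections, reproducing and derivative-reproducing properties for `H_K^B`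
    (KsecB : (Fin n → ℝ) → (Fin n → ℝ) → HB)
    (hsecB : ∀ x ∈ X, ∀ y : Fin n → ℝ, ∀ z ∈ X, ιB (KsecB x y) z = (KB z x).mulVec y)
    (hrepB : ∀ g : HB, ∀ x ∈ X, ∀ y : Fin n → ℝ, ιB g x ⬝ᵥ y = ⟪g, KsecB x y⟫)
    (KderB : (Fin n → ℝ) → Fin n → (Fin n → ℝ) → HB)
    (hdersecB : ∀ x ∈ X, ∀ p : Fin n, ∀ y : Fin n → ℝ, ∀ z ∈ X,
      ιB (KderB x p y) z = (fderiv ℝ (fun s => KB z s) x (Pi.single p 1)).mulVec y)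
    (hdiffB : ∀ g : HB, ∀ x ∈ X, DifferentiableAt ℝ (ιB g) x)
    (hderrepB : ∀ g : HB, ∀ x ∈ X, ∀ p : Fin n, ∀ y : Fin n → ℝ,
      fderiv ℝ (ιB g) x (Pi.single p 1) ⬝ᵥ y = ⟪g, KderB x p y⟫)
    -- data and constraint points
    (xd : Fin N → Fin n → ℝ) (ud : Fin N → Fin m → ℝ) (xdotd : Fin N → Fin n → ℝ)
    (xs : Fin Nc → Fin n → ℝ) (hxs : ∀ k, xs k ∈ X)
    (hsub : ∀ i : Fin N, ∃ k : Fin Nc, xd i = xs k)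
    (μf μb lam : ℝ) (hμf : 0 < μf) (hμb : 0 < μb) (hlam : 0 < lam)
    -- the fixed dual metric
    (W : (Fin n → ℝ) → Matrix (Fin n) (Fin n) ℝ)
    (hW : ContDiffOn ℝ 1 W X) (hWsymm : ∀ x ∈ X, (W x).IsSymm)
    -- the spanned subspaces
    (Vf : Submodule ℝ Hf) (VB : Submodule ℝ HB)
    (hVf : Vf = Submodule.span ℝ
      ({h | ∃ (k : Fin Nc) (y : Fin n → ℝ), h = Ksecf (xs k) y} ∪
       {h | ∃ (k : Fin Nc) (p : Fin n) (y : Fin n → ℝ), h = Kderf (xs k) p y}))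
    (hVB : VB = Submodule.span ℝ
      ({h | ∃ (k : Fin Nc) (y : Fin n → ℝ), h = KsecB (xs k) y} ∪
       {h | ∃ (k : Fin Nc) (p : Fin n) (y : Fin n → ℝ), h = KderB (xs k) p y}))
    -- feasibility predicate: the pointwise-relaxed stabilizability LMIs
    (Feas : Hf → Prop)
    (hFeas : ∀ f : Hf, Feas f ↔ ∀ k : Fin Nc, ∀ v : Fin (n - m) → ℝ,
      v ⬝ᵥ (Fstab m lam W (ιf f) (xs k)).mulVec v ≤ 0)
    -- the feasible set is nonempty
    (hne : ∃ f : Hf, Feas f) :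
    ∃ (fstar : Hf) (bstar : Fin m → HB),
      (Feas fstar ∧
        ∀ (f : Hf) (b : Fin m → HB), Feas f →
          dynLoss ιf ιB xd ud xdotd μf μb fstar bstar ≤ dynLoss ιf ιB xd ud xdotd μf μb f b)
      ∧ fstar ∈ Vf ∧ (∀ j, bstar j ∈ VB)
      ∧ ∀ (f' : Hf) (b' : Fin m → HB),
          (Feas f' ∧ ∀ (f : Hf) (b : Fin m → HB), Feas f →
            dynLoss ιf ιB xd ud xdotd μf μb f' b' ≤ dynLoss ιf ιB xd ud xdotd μf μb f b) →
          f' = fstar ∧ b' = bstar :=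
  representer_theorem_dynamics_general X Hf HB ιf ιB Ksecf hrepf Kderf hderrepf KsecB hrepB KderB
    hderrepB xd ud xdotd xs hxs hsub μf μb lam hμf hμb W Vf VB hVf hVB Feas hFeas hne
end

section
/- Let G ∈ ℝ^{d×d} be a symmetric matrix and let c > 0. Then the set { z ∈ ℝ^d : the largest eigenvalue of G + c z zᵀ has multiplicity at least 2 } has d-dimensional Lebesgue measure zero. In particular, if z is a standard Gaussian random vector in ℝ^d (z ~ 𝒩(0, I_d)), then with probability one the largest eigenvalue of G + (σ/d) z zᵀ is simple, for any σ > 0. -/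
open Matrix MeasureTheory ProbabilityTheory

/-!
If the top eigenvalue `μ` of `M = G + c w wᵀ` has an eigenspace of dimension at least two, that
eigenspace contains some `v ≠ 0` with `w ⬝ᵥ v = 0`, and then `G v = M v = μ v`: so `μ` is an
eigenvalue of `G`. For every eigenvector `u` of `G` at `μ`, the Rayleigh bound `uᵀ M u ≤ μ |u|²`
reads `μ |u|² + c (w ⬝ᵥ u)² ≤ μ |u|²`, so `w ⊥ u`. Hence `w` lies in the orthogonal complement of
one of the finitely many nonzero eigenspaces of `G`, a finite union of proper subspaces, which is
Lebesgue-null; and the standard Gaussian measure on `ℝ^d` is absolutely continuous with respect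
to Lebesgue measure.
-/

noncomputable def maxEig {d : ℕ} (G : Matrix (Fin d) (Fin d) ℝ) : ℝ :=
  sSup (spectrum ℝ G)

def topEigMultGeTwo {d : ℕ} (M : Matrix (Fin d) (Fin d) ℝ) : Prop :=
  2 ≤ Module.finrank ℝ (Module.End.eigenspace (Matrix.toLin' M) (maxEig M))

namespace MeasureTheory.Measure.AbsolutelyContinuous

theorem pi_fin : ∀ {n : ℕ} {α : Fin n → Type*} [∀ i, MeasurableSpace (α i)]
    {μ ν : ∀ i, Measure (α i)} [∀ i, SigmaFinite (μ i)] [∀ i, SigmaFinite (ν i)],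
    (∀ i, μ i ≪ ν i) → Measure.pi μ ≪ Measure.pi ν
  | 0, _, _, _, _, _, _, _ => by rw [Measure.pi_of_empty, Measure.pi_of_empty]
  | n + 1, α, _, μ, ν, _, _, h => by
    let e := MeasurableEquiv.piFinSuccAbove α 0
    rw [← (measurePreserving_piFinSuccAbove μ 0).symm e |>.map_eq,
      ← (measurePreserving_piFinSuccAbove ν 0).symm e |>.map_eq]
    exact ((h 0).prod (pi_fin fun j => h _)).map e.symm.measurable

theorem pi {ι : Type*} [Fintype ι] {α : ι → Type*} [∀ i, MeasurableSpace (α i)]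
    {μ ν : ∀ i, Measure (α i)} [∀ i, SigmaFinite (μ i)] [∀ i, SigmaFinite (ν i)]
    (h : ∀ i, μ i ≪ ν i) : Measure.pi μ ≪ Measure.pi ν := by
  let e := (Fintype.equivFin ι).symm
  rw [← (measurePreserving_piCongrLeft μ e).map_eq, ← (measurePreserving_piCongrLeft ν e).map_eq]
  exact (pi_fin fun i => h (e i)).map (MeasurableEquiv.piCongrLeft α e).measurable

end MeasureTheory.Measure.AbsolutelyContinuous

open Module in
theorem Submodule.exists_mem_ne_zero_map_eq_zero {K V : Type*} [Field K] [AddCommGroup V]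
    [Module K V] {E : Submodule K V} [FiniteDimensional K E] (hE : 2 ≤ finrank K E)
    (f : V →ₗ[K] K) : ∃ v ∈ E, v ≠ 0 ∧ f v = 0 := by
  have hrank := (f.domRestrict E).finrank_range_add_finrank_ker
  have hrange : finrank K (LinearMap.range (f.domRestrict E)) ≤ 1 :=
    (Submodule.finrank_le _).trans (finrank_self K).le
  obtain ⟨⟨v, hvE⟩, hker, hv⟩ := Submodule.exists_mem_ne_zero_of_ne_bot
    (Submodule.one_le_finrank_iff.mp (by omega) : LinearMap.ker (f.domRestrict E) ≠ ⊥)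
  exact ⟨v, hvE, by simpa using hv, hker⟩

theorem Submodule.orthogonalBilin_dotProductBilin_ne_top {R n : Type*} [CommRing R] [LinearOrder R]
    [IsStrictOrderedRing R] [Fintype n] {S : Submodule R (n → R)} (hS : S ≠ ⊥) :
    S.orthogonalBilin (dotProductBilin R R) ≠ ⊤ := by
  obtain ⟨u, hu, hu0⟩ := S.ne_bot_iff.mp hS
  intro htop
  have : u ⬝ᵥ u = 0 := (htop ▸ Submodule.mem_top : u ∈ S.orthogonalBilin _) u hu
  exact hu0 (dotProduct_self_eq_zero.mp this)

open scoped MatrixOrder in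
theorem Matrix.IsHermitian.dotProduct_mulVec_le_maxEig {d : ℕ} {M : Matrix (Fin d) (Fin d) ℝ}
    (hM : M.IsHermitian) (u : Fin d → ℝ) : u ⬝ᵥ (M *ᵥ u) ≤ maxEig M * (u ⬝ᵥ u) := by
  have hle : M ≤ algebraMap ℝ _ (maxEig M) :=
    le_algebraMap_of_spectrum_le (fun _ hx => le_csSup (finite_spectrum M).bddAbove hx) hM
  simpa [sub_mulVec, dotProduct_sub, algebraMap_eq_diagonal, Pi.algebraMap_def]
    using (le_iff.mp hle).dotProduct_mulVec_nonneg u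

theorem Matrix.IsSymm.isHermitian_add_smul_vecMulVec_self {R n : Type*} [CommRing R] [StarRing R]
    [TrivialStar R] {G : Matrix n n R} (hG : G.IsSymm) (c : R) (w : n → R) :
    (G + c • vecMulVec w w).IsHermitian :=
  isHermitian_iff_isSymm.mpr (hG.add (IsSymm.smul (transpose_vecMulVec w w) c))

theorem add_smul_vecMulVec_self_mulVec {R n : Type*} [CommRing R] [Fintype n] (G : Matrix n n R)
    (c : R) (w v : n → R) :
    (G + c • vecMulVec w w) *ᵥ v = G *ᵥ v + (c * (w ⬝ᵥ v)) • w := by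
  simp [add_mulVec, smul_mulVec, vecMulVec_mulVec, smul_smul]

section RankOnePerturbation

variable {d : ℕ} {G : Matrix (Fin d) (Fin d) ℝ} {c : ℝ} {w : Fin d → ℝ}

theorem maxEig_add_smul_vecMulVec_mem_spectrum (h : topEigMultGeTwo (G + c • vecMulVec w w)) :
    maxEig (G + c • vecMulVec w w) ∈ spectrum ℝ G := by
  obtain ⟨v, hv, hv0, hwv : w ⬝ᵥ v = 0⟩ :=
    Submodule.exists_mem_ne_zero_map_eq_zero h (dotProductBilin ℝ ℝ w)
  rw [← spectrum_toLin', ← Module.End.hasEigenvalue_iff_mem_spectrum]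
  refine Module.End.hasEigenvalue_of_hasEigenvector ⟨Module.End.mem_eigenspace_iff.mpr ?_, hv0⟩
  have hMv : (G + c • vecMulVec w w) *ᵥ v = _ := Module.End.mem_eigenspace_iff.mp hv
  rwa [add_smul_vecMulVec_self_mulVec, hwv, mul_zero, zero_smul, add_zero] at hMv

theorem dotProduct_eq_zero_of_mem_eigenspace_maxEig (hG : G.IsSymm) (hc : 0 < c) {u : Fin d → ℝ}
    (hu : u ∈ Module.End.eigenspace (toLin' G) (maxEig (G + c • vecMulVec w w))) :
    w ⬝ᵥ u = 0 := by
  have hGu : G *ᵥ u = maxEig (G + c • vecMulVec w w) • u := Module.End.mem_eigenspace_iff.mp hu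
  have := (hG.isHermitian_add_smul_vecMulVec_self c w).dotProduct_mulVec_le_maxEig u
  rw [add_smul_vecMulVec_self_mulVec, hGu, dotProduct_add, dotProduct_smul, dotProduct_smul,
    dotProduct_comm u w, smul_eq_mul, smul_eq_mul] at this
  have hsq : w ⬝ᵥ u * w ⬝ᵥ u ≤ 0 := by nlinarith
  exact mul_self_eq_zero.mp (hsq.antisymm (mul_self_nonneg _))

theorem setOf_topEigMultGeTwo_subset (hG : G.IsSymm) (hc : 0 < c) :
    {w | topEigMultGeTwo (G + c • vecMulVec w w)} ⊆
      ⋃ μ ∈ spectrum ℝ G,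
        ((Module.End.eigenspace (toLin' G) μ).orthogonalBilin (dotProductBilin ℝ ℝ) : Set _) :=
  fun w hw => Set.mem_biUnion (maxEig_add_smul_vecMulVec_mem_spectrum hw) fun u hu => by
    rw [dotProductBilin_apply_apply, dotProduct_comm]
    exact dotProduct_eq_zero_of_mem_eigenspace_maxEig hG hc hu

theorem volume_setOf_topEigMultGeTwo (hG : G.IsSymm) (hc : 0 < c) :
    volume {w | topEigMultGeTwo (G + c • vecMulVec w w)} = 0 := by
  refine measure_mono_null (setOf_topEigMultGeTwo_subset hG hc) ?_
  refine (measure_biUnion_null_iff (finite_spectrum G).countable).mpr fun μ hμ => ?_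
  have hμ' : Module.End.HasEigenvalue (toLin' G) μ := by
    rwa [Module.End.hasEigenvalue_iff_mem_spectrum, spectrum_toLin']
  exact Measure.addHaar_submodule _ _ (Submodule.orthogonalBilin_dotProductBilin_ne_top hμ')

end RankOnePerturbation

theorem rank_one_perturbation_simple_top_eigenvalue_general
    {d : ℕ} (hd : 0 < d) (G : Matrix (Fin d) (Fin d) ℝ) (hG : G.IsSymm)
    (c : ℝ) (hc : 0 < c)
    {Ω : Type} [MeasurableSpace Ω] (P : Measure Ω)
    (z : Ω → Fin d → ℝ) (hz : Measurable z)
    (hzgauss : Measure.map z P = Measure.pi (fun _ : Fin d => gaussianReal 0 1))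
    (σ : ℝ) (hσ : 0 < σ) :
    volume {w : Fin d → ℝ | topEigMultGeTwo (G + c • vecMulVec w w)} = 0
    ∧ P {a : Ω | topEigMultGeTwo (G + (σ / d) • vecMulVec (z a) (z a))} = 0 := by
  refine ⟨volume_setOf_topEigMultGeTwo hG hc, le_antisymm ?_ zero_le⟩
  have hgauss : Measure.pi (fun _ : Fin d => gaussianReal 0 1) ≪ volume := by
    rw [volume_pi]
    exact .pi fun _ => gaussianReal_absolutelyContinuous 0 one_ne_zero
  calc P {a | topEigMultGeTwo (G + (σ / d) • vecMulVec (z a) (z a))}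
      ≤ Measure.map z P {w | topEigMultGeTwo (G + (σ / d) • vecMulVec w w)} :=
        Measure.le_map_apply hz.aemeasurable _
    _ = 0 := by
        rw [hzgauss]
        exact hgauss (volume_setOf_topEigMultGeTwo hG (div_pos hσ (Nat.cast_pos.mpr hd)))

/-- **Almost-sure simplicity of the top eigenvalue under a random rank-one perturbation.**
For a symmetric matrix `G` and `c > 0`, the set of `z ∈ ℝ^d` for which the largest eigenvalue
of `G + c z zᵀ` has multiplicity at least `2` has Lebesgue measure zero. In particular, for a
standard Gaussian vector `z ~ 𝒩(0, I_d)` and any `σ > 0`, the largest eigenvalue of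
`G + (σ/d) z zᵀ` is simple with probability one. -/
theorem rank_one_perturbation_simple_top_eigenvalue
    {d : ℕ} (hd : 0 < d) (G : Matrix (Fin d) (Fin d) ℝ) (hG : G.IsSymm)
    (c : ℝ) (hc : 0 < c)
    {Ω : Type} [MeasurableSpace Ω] (P : Measure Ω) [IsProbabilityMeasure P]
    (z : Ω → Fin d → ℝ) (hz : Measurable z)
    (hzgauss : Measure.map z P = Measure.pi (fun _ : Fin d => gaussianReal 0 1))
    (σ : ℝ) (hσ : 0 < σ) :
    volume {w : Fin d → ℝ | topEigMultGeTwo (G + c • vecMulVec w w)} = 0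
    ∧ P {a : Ω | topEigMultGeTwo (G + (σ / d) • vecMulVec (z a) (z a))} = 0 :=
  rank_one_perturbation_simple_top_eigenvalue_general hd G hG c hc P z hz hzgauss σ hσ
end
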